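/- arXiv:2003.06621 — 6 statements merged into one kernel-verified Lean document; each statement's English description precedes it below -/
import Mathlib

section
/- Let a < b be real numbers and h : ℂ → ℂ be continuous on the closed strip {s : a ≤ Re s ≤ b} and holomorphic on the open strip {s : a < Re s < b}. Suppose there exist constants A, B ≥ 0 and 0 < γ < π/(b−a) such that |h(s)| ≤ A·exp(B·exp(γ·|Im s|)) for all s in the closed strip. Let E, F > 0 and P, α, β be real constants with P + a > 0 and α ≥ β, and suppose that |h(a+it)| ≤ E·|P+a+it|^α and |h(b+it)| ≤ F·|P+b+it|^β for all t ∈ ℝ. Then for all σ with a < σ < b and all t ∈ ℝ, one has |h(σ+it)| ≤ (E·|P+σ+it|^α)^{(b−σ)/(b−a)} · (F·|P+σ+it|^β)^{(σ−a)/(b−a)}. -/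
/-!
Write `w = P + s`. The claim is `‖h s‖ ≤ exp (ℓ (re s) + q (re s) * log ‖w‖)`, where `ℓ` and `q` are
the affine interpolations of `log E, log F` and `α, β` between `re s = a` and `re s = b`. Since `q`
varies with `re s`, this exponent is not the real part of a holomorphic function. But
`q (re s) = c - m * re w` with `m = (α - β) / (b - a) ≥ 0`, and `re w * log ‖w‖` has a holomorphic
minorant touching it at any prescribed point `u` of the right half-plane (because `log` is a
monotone map of that half-plane). This yields a holomorphic weight whose real part dominates the
exponent, with equality at `s = u - P`, and which is `O(|im s|)` from below. Dividing `h` by the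
exponential of the weight gives a function bounded by `1` on both edges and of admissible growth, so
Phragmén–Lindelöf bounds it by `1` in the strip; choosing `u = P + σ + t i` gives the estimate.
-/

open Complex ComplexConjugate Set Filter

theorem Real.abs_log_le_abs_log_add_of_le {c r : ℝ} (hc : 0 < c) (hcr : c ≤ r) :
    |Real.log r| ≤ |Real.log c| + r := by
  have hr := hc.trans_le hcr
  refine abs_le.2 ⟨?_, ?_⟩
  · linarith [neg_abs_le (Real.log c), Real.log_le_log hc hcr]
  · linarith [abs_nonneg (Real.log c), Real.log_le_sub_one_of_pos hr]

theorem add_mul_le_mul_exp {γ y C₀ C₁ : ℝ} (hγ : 0 < γ) (hy : 0 ≤ y) (hC₀ : 0 ≤ C₀)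
    (hC₁ : 0 ≤ C₁) : C₀ + C₁ * y ≤ (C₀ + C₁ / γ) * Real.exp (γ * y) := by
  have hexp : γ * y ≤ Real.exp (γ * y) := by linarith [Real.add_one_le_exp (γ * y)]
  calc C₀ + C₁ * y = C₀ * 1 + C₁ / γ * (γ * y) := by field_simp
    _ ≤ C₀ * Real.exp (γ * y) + C₁ / γ * Real.exp (γ * y) := by
      gcongr
      exact Real.one_le_exp (by positivity)
    _ = _ := by ring

namespace Complex

theorem re_conj_sub_mul_log_sub_log_nonneg {u v : ℂ} (hu : 0 < u.re) (hv : 0 < v.re) :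
    0 ≤ (conj (v - u) * (log v - log u)).re := by
  set Δ := v - u
  have hre : ∀ τ ∈ Icc (0 : ℝ) 1, 0 < (u + τ * Δ).re := fun τ hτ => by
    have : (u + τ * Δ).re = (1 - τ) * u.re + τ * v.re := by simp [Δ]; ring
    rw [this]
    rcases eq_or_lt_of_le hτ.1 with rfl | hτ₀
    · simpa using hu
    · nlinarith [hτ.2]
  have hderiv : ∀ τ ∈ Icc (0 : ℝ) 1, HasDerivAt (fun τ : ℝ => (conj Δ * log (u + τ * Δ)).re)
      (normSq Δ * (u + τ * Δ)⁻¹.re) τ := fun τ hτ => by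
    have hlog := (hasDerivAt_log (mem_slitPlane_iff.2 (.inl (hre τ hτ)))).comp (τ : ℂ)
      (((hasDerivAt_id (τ : ℂ)).mul_const Δ).const_add u)
    convert (hlog.const_mul (conj Δ)).real_of_complex using 1
    · rfl
    · have : conj Δ * ((u + τ * Δ)⁻¹ * (1 * Δ)) = (normSq Δ : ℂ) * (u + τ * Δ)⁻¹ := by
        rw [normSq_eq_conj_mul_self]; ring
      rw [this, re_ofReal_mul]
  have hmono : MonotoneOn (fun τ : ℝ => (conj Δ * log (u + τ * Δ)).re) (Icc 0 1) :=
    monotoneOn_of_hasDerivWithinAt_nonneg (convex_Icc 0 1)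
      (fun τ hτ => (hderiv τ hτ).continuousAt.continuousWithinAt)
      (fun τ hτ => (hderiv τ (interior_subset hτ)).hasDerivWithinAt)
      (fun τ hτ => mul_nonneg (normSq_nonneg _)
        (by rw [inv_re]; exact div_nonneg (hre τ (interior_subset hτ)).le (normSq_nonneg _)))
  have := hmono (by simp) (by simp) zero_le_one
  simpa [Δ, mul_sub] using this

/-- A holomorphic function of `w` whose real part lies below `w.re * Real.log ‖w‖` on the right
half-plane (by `re_conj_sub_mul_log_sub_log_nonneg`) and touches it at `w = u`. -/
noncomputable def mulLogMinorant (u w : ℂ) : ℂ :=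
  ((w + conj u) * log w + conj (log u) * (w - u)) / 2

theorem re_mulLogMinorant (u w : ℂ) :
    (mulLogMinorant u w).re =
      w.re * Real.log ‖w‖ - (conj (w - u) * (log w - log u)).re / 2 := by
  simp only [mulLogMinorant, div_ofNat_re, add_re, sub_re, mul_re, conj_re, conj_im, add_im,
    sub_im, log_re, log_im]
  ring

theorem differentiableAt_mulLogMinorant (u : ℂ) {w : ℂ} (hw : w ∈ slitPlane) :
    DifferentiableAt ℂ (mulLogMinorant u) w := by
  unfold mulLogMinorant
  fun_prop (disch := assumption)

end Complex

theorem PhragmenLindelof.norm_le_exp_re_of_vertical_strip {a b γ A B C : ℝ} {f g : ℂ → ℂ}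
    (hf : DiffContOnCl ℂ f (re ⁻¹' Ioo a b)) (hg : DiffContOnCl ℂ g (re ⁻¹' Ioo a b))
    (hγ : γ < Real.pi / (b - a))
    (hf_le : ∀ z ∈ re ⁻¹' Ioo a b, ‖f z‖ ≤ A * Real.exp (B * Real.exp (γ * |z.im|)))
    (hg_le : ∀ z ∈ re ⁻¹' Ioo a b, -(g z).re ≤ C * Real.exp (γ * |z.im|))
    (hle_a : ∀ z : ℂ, z.re = a → ‖f z‖ ≤ Real.exp (g z).re)
    (hle_b : ∀ z : ℂ, z.re = b → ‖f z‖ ≤ Real.exp (g z).re) {z : ℂ} (hza : a ≤ z.re)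
    (hzb : z.re ≤ b) : ‖f z‖ ≤ Real.exp (g z).re := by
  have hnorm : ∀ z, ‖f z * exp (-g z)‖ = ‖f z‖ * Real.exp (-(g z).re) := fun z => by
    rw [norm_mul, norm_exp, neg_re]
  have hle_one : ∀ z, ‖f z * exp (-g z)‖ ≤ 1 ↔ ‖f z‖ ≤ Real.exp (g z).re := fun z => by
    rw [hnorm, Real.exp_neg, ← div_eq_mul_inv, div_le_one (Real.exp_pos _)]
  have hfg : DiffContOnCl ℂ (fun z => f z * exp (-g z)) (re ⁻¹' Ioo a b) :=
    ⟨hf.1.mul hg.1.neg.cexp, hf.2.mul hg.2.neg.cexp⟩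
  refine (hle_one z).1 (PhragmenLindelof.vertical_strip (z := z) hfg ⟨γ, hγ, B + C, ?_⟩
    (fun z hz => (hle_one z).2 (hle_a z hz)) (fun z hz => (hle_one z).2 (hle_b z hz)) hza hzb)
  refine Asymptotics.isBigO_iff.2 ⟨A, eventually_inf_principal.2 (.of_forall fun z hz => ?_)⟩
  rw [hnorm, Real.norm_eq_abs, Real.abs_exp, add_mul, Real.exp_add, ← mul_assoc]
  exact mul_le_mul (hf_le z hz) (Real.exp_le_exp.2 (by linarith [hg_le z hz])) (Real.exp_nonneg _)
    ((norm_nonneg _).trans (hf_le z hz))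

section Interpolation

variable (a b E F α β P : ℝ)

noncomputable def interpolationLogBound (x r : ℝ) : ℝ :=
  ((b - x) * (Real.log E + α * Real.log r) + (x - a) * (Real.log F + β * Real.log r)) / (b - a)

/-- `(b + P) * α - (a + P) * β - (α - β) * re (P + ζ)` is `b - a` times the exponent of `‖P + ζ‖`
in `interpolationLogBound (re ζ)`. -/
noncomputable def interpolationWeight (u ζ : ℂ) : ℂ :=
  ((b - a)⁻¹ : ℝ) * ((b - ζ) * Real.log E + (ζ - a) * Real.log F
    + ((b + P) * α - (a + P) * β) * log (P + ζ) - (α - β) * mulLogMinorant u (P + ζ))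

variable {a b E F α β P}

theorem exp_interpolationLogBound (hE : 0 < E) (hF : 0 < F) {r : ℝ} (hr : 0 < r) (x : ℝ) :
    Real.exp (interpolationLogBound a b E F α β x r) =
      (E * r ^ α) ^ ((b - x) / (b - a)) * (F * r ^ β) ^ ((x - a) / (b - a)) := by
  rw [Real.rpow_def_of_pos (x := E * _) (by positivity),
    Real.rpow_def_of_pos (x := F * _) (by positivity), ← Real.exp_add,
    Real.log_mul hE.ne' (by positivity), Real.log_mul hF.ne' (by positivity),
    Real.log_rpow hr, Real.log_rpow hr, interpolationLogBound]
  ring_nf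

theorem exp_interpolationLogBound_left (hab : a ≠ b) (hE : 0 < E) (hF : 0 < F) {r : ℝ}
    (hr : 0 < r) : Real.exp (interpolationLogBound a b E F α β a r) = E * r ^ α := by
  rw [exp_interpolationLogBound hE hF hr, div_self (sub_ne_zero.2 hab.symm)]
  simp

theorem exp_interpolationLogBound_right (hab : a ≠ b) (hE : 0 < E) (hF : 0 < F) {r : ℝ}
    (hr : 0 < r) : Real.exp (interpolationLogBound a b E F α β b r) = F * r ^ β := by
  rw [exp_interpolationLogBound hE hF hr, div_self (sub_ne_zero.2 hab.symm)]
  simp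

theorem abs_interpolationLogBound_le (hab : a < b) {x : ℝ} (hx : x ∈ Icc a b) (r : ℝ) :
    |interpolationLogBound a b E F α β x r| ≤
      |Real.log E| + |Real.log F| + (|α| + |β|) * |Real.log r| := by
  have hba : 0 < b - a := sub_pos.2 hab
  have hleft : |(b - x) / (b - a)| ≤ 1 := by
    rw [abs_of_nonneg (div_nonneg (by linarith [hx.2]) hba.le), div_le_one hba]; linarith [hx.1]
  have hright : |(x - a) / (b - a)| ≤ 1 := by
    rw [abs_of_nonneg (div_nonneg (by linarith [hx.1]) hba.le), div_le_one hba]; linarith [hx.2]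
  have hsplit : interpolationLogBound a b E F α β x r =
      (b - x) / (b - a) * (Real.log E + α * Real.log r)
        + (x - a) / (b - a) * (Real.log F + β * Real.log r) := by
    rw [interpolationLogBound]; ring
  have hE' : |Real.log E + α * Real.log r| ≤ |Real.log E| + |α| * |Real.log r| :=
    (abs_add_le _ _).trans_eq (by rw [abs_mul])
  have hF' : |Real.log F + β * Real.log r| ≤ |Real.log F| + |β| * |Real.log r| :=
    (abs_add_le _ _).trans_eq (by rw [abs_mul])
  calc _ ≤ |(b - x) / (b - a)| * |Real.log E + α * Real.log r|
        + |(x - a) / (b - a)| * |Real.log F + β * Real.log r| := by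
          rw [hsplit, ← abs_mul, ← abs_mul]; exact abs_add_le _ _
    _ ≤ 1 * (|Real.log E| + |α| * |Real.log r|) + 1 * (|Real.log F| + |β| * |Real.log r|) := by
          gcongr
    _ = _ := by ring

theorem re_interpolationWeight (u ζ : ℂ) :
    (interpolationWeight a b E F α β P u ζ).re =
      interpolationLogBound a b E F α β ζ.re ‖P + ζ‖
        + (α - β) / (b - a) * (conj (P + ζ - u) * (log (P + ζ) - log u)).re / 2 := by
  simp only [interpolationWeight, add_re, sub_re, mul_re, add_im, sub_im, mul_im, ofReal_re,
    ofReal_im, log_re, re_mulLogMinorant]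
  rw [interpolationLogBound]
  ring

theorem interpolationLogBound_le_re_interpolationWeight (hab : a ≤ b) (hαβ : β ≤ α) {u ζ : ℂ}
    (hu : 0 < u.re) (hζ : 0 < P + ζ.re) :
    interpolationLogBound a b E F α β ζ.re ‖P + ζ‖ ≤
      (interpolationWeight a b E F α β P u ζ).re := by
  rw [re_interpolationWeight]
  have hmono := re_conj_sub_mul_log_sub_log_nonneg hu (by simpa using hζ : 0 < ((P : ℂ) + ζ).re)
  have hslope : 0 ≤ (α - β) / (b - a) := div_nonneg (sub_nonneg.2 hαβ) (sub_nonneg.2 hab)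
  exact le_add_of_nonneg_right (div_nonneg (mul_nonneg hslope hmono) zero_le_two)

theorem re_interpolationWeight_self (z : ℂ) :
    (interpolationWeight a b E F α β P (P + z) z).re =
      interpolationLogBound a b E F α β z.re ‖P + z‖ := by
  simp [re_interpolationWeight]

theorem differentiableAt_interpolationWeight (u : ℂ) {ζ : ℂ} (hζ : 0 < P + ζ.re) :
    DifferentiableAt ℂ (interpolationWeight a b E F α β P u) ζ := by
  have hslit : (P : ℂ) + ζ ∈ slitPlane := mem_slitPlane_iff.2 (.inl (by simpa using hζ))
  have hlog : DifferentiableAt ℂ (fun ζ : ℂ => log (P + ζ)) ζ := by fun_prop (disch := assumption)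
  have hmin : DifferentiableAt ℂ (fun ζ : ℂ => mulLogMinorant u (P + ζ)) ζ :=
    (differentiableAt_mulLogMinorant u hslit).comp ζ (by fun_prop)
  unfold interpolationWeight
  fun_prop

theorem forall_re_eq_norm_le_exp_re_interpolationWeight (hab : a ≤ b) (hαβ : β ≤ α) {u : ℂ}
    (hu : 0 < u.re) {x c q : ℝ} (hPx : 0 < P + x)
    (hcq : ∀ r > 0, c * r ^ q = Real.exp (interpolationLogBound a b E F α β x r)) {h : ℂ → ℂ}
    (hline : ∀ t : ℝ, ‖h (x + t * I)‖ ≤ c * ‖((P + x : ℝ) : ℂ) + t * I‖ ^ q) (ζ : ℂ)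
    (hζ : ζ.re = x) : ‖h ζ‖ ≤ Real.exp (interpolationWeight a b E F α β P u ζ).re := by
  have hζ' : (x : ℂ) + ζ.im * I = ζ := by rw [← hζ, re_add_im]
  have hPζ : ((P + x : ℝ) : ℂ) + ζ.im * I = P + ζ := by rw [ofReal_add, add_assoc, hζ']
  have hpos : 0 < P + ζ.re := hζ ▸ hPx
  calc ‖h ζ‖ ≤ c * ‖(P : ℂ) + ζ‖ ^ q := by simpa only [hζ', hPζ] using hline ζ.im
    _ = Real.exp (interpolationLogBound a b E F α β ζ.re ‖P + ζ‖) := by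
      rw [hζ, hcq _ (hpos.trans_le (by simpa using re_le_norm ((P : ℂ) + ζ)))]
    _ ≤ _ := Real.exp_le_exp.2 (interpolationLogBound_le_re_interpolationWeight hab hαβ hu hpos)

theorem neg_re_interpolationWeight_le (hab : a < b) (hαβ : β ≤ α) (hPa : 0 < P + a) {γ : ℝ}
    (hγ : 0 < γ) {u : ℂ} (hu : 0 < u.re) : ∃ C, ∀ ζ : ℂ, ζ.re ∈ Icc a b →
      -(interpolationWeight a b E F α β P u ζ).re ≤ C * Real.exp (γ * |ζ.im|) := by
  set K := |α| + |β|
  set C₀ := |Real.log E| + |Real.log F| + K * (|Real.log (P + a)| + (|P| + |a| + |b|))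
  refine ⟨C₀ + K / γ, fun ζ hζ => ?_⟩
  have hre : (P + ζ : ℂ).re = P + ζ.re := by simp
  have hlower : P + a ≤ ‖P + ζ‖ := by linarith [re_le_norm ((P : ℂ) + ζ), hζ.1]
  have hupper : ‖P + ζ‖ ≤ (|P| + |a| + |b|) + |ζ.im| := by
    refine (norm_le_abs_re_add_abs_im _).trans ?_
    rw [hre, add_im, ofReal_im, zero_add]
    gcongr
    refine abs_le.2 ⟨?_, ?_⟩ <;>
      linarith [hζ.1, hζ.2, neg_abs_le P, le_abs_self P, neg_abs_le a, abs_nonneg a,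
        le_abs_self b, abs_nonneg b]
  calc -(interpolationWeight a b E F α β P u ζ).re
      ≤ -interpolationLogBound a b E F α β ζ.re ‖P + ζ‖ :=
        neg_le_neg (interpolationLogBound_le_re_interpolationWeight hab.le hαβ hu
          (by linarith [hζ.1]))
    _ ≤ |Real.log E| + |Real.log F| + K * |Real.log ‖P + ζ‖| :=
        (neg_le_abs _).trans (abs_interpolationLogBound_le hab hζ _)
    _ ≤ |Real.log E| + |Real.log F| + K * (|Real.log (P + a)| + ((|P| + |a| + |b|) + |ζ.im|)) := by
        gcongr
        exact (Real.abs_log_le_abs_log_add_of_le hPa hlower).trans (by linarith)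
    _ = C₀ + K * |ζ.im| := by ring
    _ ≤ _ := add_mul_le_mul_exp hγ (abs_nonneg _) (by positivity) (by positivity)

end Interpolation

theorem rademacher_interpolation_general
    (a b : ℝ) (hab : a < b) (h : ℂ → ℂ)
    (hcont : ContinuousOn h {s : ℂ | a ≤ s.re ∧ s.re ≤ b})
    (hdiff : DifferentiableOn ℂ h {s : ℂ | a < s.re ∧ s.re < b})
    (A B γ : ℝ) (hγ0 : 0 < γ) (hγ : γ < Real.pi / (b - a))
    (hgrow : ∀ s : ℂ, a ≤ s.re → s.re ≤ b →
      ‖h s‖ ≤ A * Real.exp (B * Real.exp (γ * |s.im|)))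
    (E F P α β : ℝ) (hE : 0 < E) (hF : 0 < F) (hPa : 0 < P + a) (hαβ : β ≤ α)
    (hla : ∀ t : ℝ, ‖h ((a : ℂ) + t * Complex.I)‖ ≤
      E * ‖((P + a : ℝ) : ℂ) + t * Complex.I‖ ^ α)
    (hlb : ∀ t : ℝ, ‖h ((b : ℂ) + t * Complex.I)‖ ≤
      F * ‖((P + b : ℝ) : ℂ) + t * Complex.I‖ ^ β) :
    ∀ σ t : ℝ, a < σ → σ < b →
      ‖h ((σ : ℂ) + t * Complex.I)‖ ≤
        (E * ‖((P + σ : ℝ) : ℂ) + t * Complex.I‖ ^ α) ^ ((b - σ) / (b - a)) *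
        (F * ‖((P + σ : ℝ) : ℂ) + t * Complex.I‖ ^ β) ^ ((σ - a) / (b - a)) := by
  intro σ t hσa hσb
  set z : ℂ := σ + t * I
  have hzre : z.re = σ := by simp [z]
  have hu : 0 < ((P : ℂ) + z).re := by simp [z]; linarith
  have hPz : ((P + σ : ℝ) : ℂ) + t * I = P + z := by push_cast; ring
  have hstrip : closure (re ⁻¹' Ioo a b) = re ⁻¹' Icc a b := by
    rw [closure_preimage_re, closure_Ioo hab.ne]
  have hh : DiffContOnCl ℂ h (re ⁻¹' Ioo a b) := ⟨hdiff, hstrip ▸ hcont⟩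
  have hg : DiffContOnCl ℂ (interpolationWeight a b E F α β P (P + z)) (re ⁻¹' Ioo a b) :=
    DifferentiableOn.diffContOnCl fun ζ hζ => (differentiableAt_interpolationWeight _
      (by rw [hstrip] at hζ; linarith [hζ.1])).differentiableWithinAt
  obtain ⟨C, hC⟩ := neg_re_interpolationWeight_le (E := E) (F := F) hab hαβ hPa hγ0 hu
  have hbound := PhragmenLindelof.norm_le_exp_re_of_vertical_strip (z := z) hh hg hγ
    (fun ζ hζ => hgrow ζ hζ.1.le hζ.2.le) (fun ζ hζ => hC ζ (Ioo_subset_Icc_self hζ))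
    (forall_re_eq_norm_le_exp_re_interpolationWeight hab.le hαβ hu hPa
      (fun r hr => (exp_interpolationLogBound_left hab.ne hE hF hr).symm) hla)
    (forall_re_eq_norm_le_exp_re_interpolationWeight hab.le hαβ hu (by linarith)
      (fun r hr => (exp_interpolationLogBound_right hab.ne hE hF hr).symm) hlb)
    (hzre ▸ hσa.le) (hzre ▸ hσb.le)
  rwa [re_interpolationWeight_self, hzre, exp_interpolationLogBound hE hF (hu.trans_le
    (re_le_norm _)) σ, ← hPz] at hbound

/-- Rademacher's Phragmén–Lindelöf-type interpolation theorem on a vertical strip. -/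
theorem rademacher_interpolation
    (a b : ℝ) (hab : a < b) (h : ℂ → ℂ)
    (hcont : ContinuousOn h {s : ℂ | a ≤ s.re ∧ s.re ≤ b})
    (hdiff : DifferentiableOn ℂ h {s : ℂ | a < s.re ∧ s.re < b})
    (A B γ : ℝ) (hA : 0 ≤ A) (hB : 0 ≤ B) (hγ0 : 0 < γ) (hγ : γ < Real.pi / (b - a))
    (hgrow : ∀ s : ℂ, a ≤ s.re → s.re ≤ b →
      ‖h s‖ ≤ A * Real.exp (B * Real.exp (γ * |s.im|)))
    (E F P α β : ℝ) (hE : 0 < E) (hF : 0 < F) (hPa : 0 < P + a) (hαβ : β ≤ α)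
    (hla : ∀ t : ℝ, ‖h ((a : ℂ) + t * Complex.I)‖ ≤
      E * ‖((P + a : ℝ) : ℂ) + t * Complex.I‖ ^ α)
    (hlb : ∀ t : ℝ, ‖h ((b : ℂ) + t * Complex.I)‖ ≤
      F * ‖((P + b : ℝ) : ℂ) + t * Complex.I‖ ^ β) :
    ∀ σ t : ℝ, a < σ → σ < b →
      ‖h ((σ : ℂ) + t * Complex.I)‖ ≤
        (E * ‖((P + σ : ℝ) : ℂ) + t * Complex.I‖ ^ α) ^ ((b - σ) / (b - a)) *
        (F * ‖((P + σ : ℝ) : ℂ) + t * Complex.I‖ ^ β) ^ ((σ - a) / (b - a)) :=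
  rademacher_interpolation_general a b hab h hcont hdiff A B γ hγ0 hγ hgrow E F P α β hE hF hPa hαβ
    hla hlb
end

section
/- Let W ≥ 1 and E₀, F₀ > 0 be real numbers. Let h : ℂ → ℂ be continuous on the closed strip {s : −1/4 ≤ Re s ≤ 5/4}, holomorphic on the open strip {s : −1/4 < Re s < 5/4}, and satisfy a growth bound |h(s)| ≤ A·exp(B·exp(γ·|Im s|)) on the closed strip for some constants A, B ≥ 0 and 0 < γ < 2π/3. Suppose that for all t ∈ ℝ one has |h(5/4+it)| ≤ F₀ and |h(−1/4+it)| ≤ E₀·W³·|1+it|³. Then there is a constant C, depending only on E₀ and F₀, such that for all σ with −1/4 < σ < 5/4 and all t ∈ ℝ, |h(σ+it)| ≤ C·W^{2(5/4−σ)}·(3+|t|)^{2(5/4−σ)}. -/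
/-!
Multiply `h` by the weight `G(s) = (W² (4 - s²)) ^ (s - 5/4)`, holomorphic on the strip since
`4 - s²` has positive real part there. Because `Im s · arg (4 - s²)` is bounded on the strip, `|G s|`
equals `(W² |4 - s²|) ^ (Re s - 5/4)` up to factors `e^{±3}`, and `W² |4 - s²|` is comparable to
`(W (3 + |Im s|))²`. Hence `h G` is bounded on both edges and still of admissible growth, so
Phragmén–Lindelöf bounds it on the strip; dividing by `G` gives the estimate.
-/

open Complex Set Filter

theorem Complex.abs_arg_le_abs_im_div_re {z : ℂ} (hz : 0 < z.re) :
    |arg z| ≤ |z.im| / z.re := by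
  have hlt : |arg z| < Real.pi / 2 := abs_arg_lt_pi_div_two_iff.2 (Or.inl hz)
  rcases le_total 0 (arg z) with h | h
  · rw [abs_of_nonneg h] at hlt ⊢
    calc arg z ≤ Real.tan (arg z) := Real.le_tan h hlt
      _ = z.im / z.re := tan_arg z
      _ ≤ |z.im| / z.re := by gcongr; exact le_abs_self _
  · rw [abs_of_nonpos h] at hlt ⊢
    calc -arg z ≤ Real.tan (-arg z) := Real.le_tan (neg_nonneg.2 h) hlt
      _ = -z.im / z.re := by rw [Real.tan_neg, tan_arg, neg_div]
      _ ≤ |z.im| / z.re := by gcongr; exact neg_le_abs _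

section FourSubSq

variable {z : ℂ}

theorem re_four_sub_sq (z : ℂ) : (4 - z ^ 2).re = 4 - z.re ^ 2 + z.im ^ 2 := by
  simp [sq]; ring

theorem im_four_sub_sq (z : ℂ) : (4 - z ^ 2).im = -(2 * z.re * z.im) := by
  simp [sq]; ring

theorem re_four_sub_sq_pos (hz : |z.re| < 2) : 0 < (4 - z ^ 2).re := by
  rw [re_four_sub_sq]
  nlinarith [sq_abs z.re, abs_nonneg z.re, sq_nonneg z.im]

theorem le_re_four_sub_sq (hz : |z.re| ≤ 5 / 4) : 39 / 16 + z.im ^ 2 ≤ (4 - z ^ 2).re := by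
  rw [re_four_sub_sq]
  nlinarith [sq_abs z.re, abs_nonneg z.re]

theorem norm_four_sub_sq_le (hz : |z.re| ≤ 5 / 4) : ‖4 - z ^ 2‖ ≤ (3 + |z.im|) ^ 2 := by
  have hsq : ‖z ^ 2‖ = z.re ^ 2 + z.im ^ 2 := by
    rw [norm_pow, Complex.sq_norm, normSq_apply]; ring
  calc ‖4 - z ^ 2‖ ≤ ‖(4 : ℂ)‖ + ‖z ^ 2‖ := norm_sub_le _ _
    _ ≤ (3 + |z.im|) ^ 2 := by
      rw [hsq, norm_ofNat]
      nlinarith [sq_abs z.re, sq_abs z.im, abs_nonneg z.re, abs_nonneg z.im]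

theorem sq_three_add_abs_im_le (hz : |z.re| ≤ 5 / 4) : (3 + |z.im|) ^ 2 ≤ 16 * ‖4 - z ^ 2‖ := by
  have := (le_re_four_sub_sq hz).trans (re_le_norm _)
  nlinarith [sq_abs z.im, sq_nonneg (|z.im| - 1)]

theorem abs_im_mul_arg_four_sub_sq_le (hz : |z.re| ≤ 5 / 4) : |z.im * arg (4 - z ^ 2)| ≤ 3 := by
  have hre := le_re_four_sub_sq hz
  have hpos : 0 < (4 - z ^ 2).re := by nlinarith [sq_nonneg z.im]
  have him : |(4 - z ^ 2).im| ≤ 5 / 2 * |z.im| := by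
    rw [im_four_sub_sq, abs_neg, abs_mul, abs_mul, abs_two]
    nlinarith [abs_nonneg z.im]
  calc |z.im * arg (4 - z ^ 2)| ≤ |z.im| * (|(4 - z ^ 2).im| / (4 - z ^ 2).re) := by
        rw [abs_mul]; gcongr; exact abs_arg_le_abs_im_div_re hpos
    _ ≤ 3 := by
      rw [mul_div_assoc', div_le_iff₀ hpos]
      nlinarith [sq_abs z.im, abs_nonneg z.im]

end FourSubSq

noncomputable def convexityWeight (W : ℝ) (z : ℂ) : ℂ :=
  (((W ^ 2 : ℝ) : ℂ) * (4 - z ^ 2)) ^ (z - 5 / 4)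

section ConvexityWeight

variable {W : ℝ} {z : ℂ}

theorem re_ofReal_sq_mul_four_sub_sq_pos (hW : W ≠ 0) (hz : |z.re| < 2) :
    0 < (((W ^ 2 : ℝ) : ℂ) * (4 - z ^ 2)).re := by
  rw [re_ofReal_mul]
  exact mul_pos (by positivity) (re_four_sub_sq_pos hz)

theorem differentiableOn_convexityWeight (hW : W ≠ 0) :
    DifferentiableOn ℂ (convexityWeight W) {z : ℂ | |z.re| < 2} := fun _ hz =>
  DifferentiableAt.differentiableWithinAt <| DifferentiableAt.cpow (by fun_prop) (by fun_prop)
    (mem_slitPlane_iff.2 (Or.inl (re_ofReal_sq_mul_four_sub_sq_pos hW hz)))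

theorem norm_convexityWeight (hW : W ≠ 0) (hz : |z.re| < 2) :
    ‖convexityWeight W z‖ =
      (W ^ 2 * ‖4 - z ^ 2‖) ^ (z.re - 5 / 4) / Real.exp (arg (4 - z ^ 2) * z.im) := by
  have hne : ((W ^ 2 : ℝ) : ℂ) * (4 - z ^ 2) ≠ 0 := fun h0 =>
    (re_ofReal_sq_mul_four_sub_sq_pos hW hz).ne' (by rw [h0, zero_re])
  rw [convexityWeight, norm_cpow_of_ne_zero hne, arg_real_mul _ (by positivity), norm_mul,
    norm_real, Real.norm_of_nonneg (by positivity)]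
  simp

theorem norm_convexityWeight_le (hW : W ≠ 0) (hz : |z.re| ≤ 5 / 4) :
    ‖convexityWeight W z‖ ≤ (W ^ 2 * ‖4 - z ^ 2‖) ^ (z.re - 5 / 4) * Real.exp 3 := by
  rw [norm_convexityWeight hW (by linarith), div_eq_mul_inv, ← Real.exp_neg]
  gcongr
  linarith [abs_le.1 (abs_im_mul_arg_four_sub_sq_le hz)]

theorem le_norm_convexityWeight (hW : W ≠ 0) (hz : |z.re| ≤ 5 / 4) :
    (W ^ 2 * ‖4 - z ^ 2‖) ^ (z.re - 5 / 4) / Real.exp 3 ≤ ‖convexityWeight W z‖ := by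
  rw [norm_convexityWeight hW (by linarith)]
  gcongr
  linarith [abs_le.1 (abs_im_mul_arg_four_sub_sq_le hz)]

theorem one_le_sq_mul_norm_four_sub_sq (hW : 1 ≤ W) (hz : |z.re| ≤ 5 / 4) :
    1 ≤ W ^ 2 * ‖4 - z ^ 2‖ := by
  have := (le_re_four_sub_sq hz).trans (re_le_norm _)
  nlinarith [sq_nonneg z.im]

theorem norm_convexityWeight_le_exp_three (hW : 1 ≤ W) (hz : |z.re| ≤ 5 / 4) :
    ‖convexityWeight W z‖ ≤ Real.exp 3 :=
  calc ‖convexityWeight W z‖ ≤ (W ^ 2 * ‖4 - z ^ 2‖) ^ (z.re - 5 / 4) * Real.exp 3 :=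
        norm_convexityWeight_le (by positivity) hz
    _ ≤ 1 * Real.exp 3 := by
        gcongr
        exact Real.rpow_le_one_of_one_le_of_nonpos (one_le_sq_mul_norm_four_sub_sq hW hz)
          (by linarith [le_abs_self z.re])
    _ = Real.exp 3 := one_mul _

theorem norm_convexityWeight_le_of_re_eq (hW : 1 ≤ W) (hz : z.re = -(1 / 4)) :
    ‖convexityWeight W z‖ ≤ 64 * Real.exp 3 / (W * (3 + |z.im|)) ^ 3 := by
  have hzabs : |z.re| ≤ 5 / 4 := by rw [hz]; norm_num
  have hu : 0 < W * (3 + |z.im|) / 4 := by positivity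
  have hlower : (W * (3 + |z.im|) / 4) ^ 2 ≤ W ^ 2 * ‖4 - z ^ 2‖ := by
    nlinarith [sq_three_add_abs_im_le hzabs, sq_nonneg W]
  calc ‖convexityWeight W z‖ ≤ (W ^ 2 * ‖4 - z ^ 2‖) ^ (z.re - 5 / 4) * Real.exp 3 :=
        norm_convexityWeight_le (by positivity) hzabs
    _ ≤ ((W * (3 + |z.im|) / 4) ^ 2) ^ (z.re - 5 / 4) * Real.exp 3 := by
        gcongr ?_ * _
        exact Real.rpow_le_rpow_of_nonpos (by positivity) hlower (by rw [hz]; norm_num)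
    _ = 64 * Real.exp 3 / (W * (3 + |z.im|)) ^ 3 := by
        rw [hz, ← Real.rpow_natCast, ← Real.rpow_mul hu.le]
        norm_num [Real.rpow_neg hu.le]
        field_simp
        norm_num

theorem norm_le_of_norm_mul_convexityWeight_le {u : ℂ} {M : ℝ} (hW : 1 ≤ W)
    (hz : |z.re| ≤ 5 / 4) (hf : ‖u * convexityWeight W z‖ ≤ M) :
    ‖u‖ ≤ M * Real.exp 3 * (W * (3 + |z.im|)) ^ (2 * (5 / 4 - z.re)) := by
  set R := W ^ 2 * ‖4 - z ^ 2‖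
  have hR : 0 < R := one_pos.trans_le (one_le_sq_mul_norm_four_sub_sq hW hz)
  have hG : 0 < ‖convexityWeight W z‖ :=
    (div_pos (Real.rpow_pos_of_pos hR _) (Real.exp_pos 3)).trans_le
      (le_norm_convexityWeight (by positivity) hz)
  have hM : 0 ≤ M := (norm_nonneg _).trans hf
  have hRupper : R ≤ (W * (3 + |z.im|)) ^ 2 := by
    rw [mul_pow]
    exact mul_le_mul_of_nonneg_left (norm_four_sub_sq_le hz) (sq_nonneg W)
  calc ‖u‖ ≤ M / ‖convexityWeight W z‖ := by
        rw [le_div_iff₀ hG, ← norm_mul]; exact hf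
    _ ≤ M / (R ^ (z.re - 5 / 4) / Real.exp 3) :=
        div_le_div_of_nonneg_left hM (by positivity) (le_norm_convexityWeight (by positivity) hz)
    _ = M * Real.exp 3 * R ^ (5 / 4 - z.re) := by
        rw [div_div_eq_mul_div, ← neg_sub, Real.rpow_neg hR.le]
        field_simp
    _ ≤ M * Real.exp 3 * ((W * (3 + |z.im|)) ^ 2) ^ (5 / 4 - z.re) := by
        gcongr; linarith [le_abs_self z.re]
    _ = M * Real.exp 3 * (W * (3 + |z.im|)) ^ (2 * (5 / 4 - z.re)) := by
        rw [← Real.rpow_natCast, ← Real.rpow_mul (by positivity)]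
        norm_num

theorem norm_mul_convexityWeight_le_of_re_eq {u : ℂ} {E : ℝ} (hW : 1 ≤ W)
    (hz : z.re = -(1 / 4)) (hf : ‖u‖ ≤ E * W ^ 3 * (3 + |z.im|) ^ 3) :
    ‖u * convexityWeight W z‖ ≤ 64 * E * Real.exp 3 := by
  have hpos : 0 < W * (3 + |z.im|) := by positivity
  calc ‖u * convexityWeight W z‖
      ≤ E * W ^ 3 * (3 + |z.im|) ^ 3 * (64 * Real.exp 3 / (W * (3 + |z.im|)) ^ 3) := by
        rw [norm_mul]
        exact mul_le_mul hf (norm_convexityWeight_le_of_re_eq hW hz) (norm_nonneg _)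
          ((norm_nonneg _).trans hf)
    _ = 64 * E * Real.exp 3 := by
        field_simp

theorem norm_mul_convexityWeight_le_of_norm_le {u : ℂ} {K : ℝ} (hW : 1 ≤ W)
    (hz : |z.re| ≤ 5 / 4) (hf : ‖u‖ ≤ K) : ‖u * convexityWeight W z‖ ≤ K * Real.exp 3 := by
  rw [norm_mul]
  exact mul_le_mul hf (norm_convexityWeight_le_exp_three hW hz) (norm_nonneg _)
    ((norm_nonneg _).trans hf)

end ConvexityWeight

theorem diffContOnCl_re_preimage_Ioo {E : Type*} [NormedAddCommGroup E] [NormedSpace ℂ E]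
    {f : ℂ → E} {a b : ℝ} (hc : ContinuousOn f (re ⁻¹' Icc a b))
    (hd : DifferentiableOn ℂ f (re ⁻¹' Ioo a b)) : DiffContOnCl ℂ f (re ⁻¹' Ioo a b) :=
  ⟨hd, hc.mono <| closure_minimal (preimage_mono Ioo_subset_Icc_self)
    (isClosed_Icc.preimage continuous_re)⟩

theorem PhragmenLindelof.vertical_strip_of_norm_le {E : Type*} [NormedAddCommGroup E]
    [NormedSpace ℂ E] {f : ℂ → E} {a b A B γ M : ℝ} {z : ℂ}
    (hc : ContinuousOn f (re ⁻¹' Icc a b)) (hd : DifferentiableOn ℂ f (re ⁻¹' Ioo a b))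
    (hγ : γ < Real.pi / (b - a))
    (hgrowth : ∀ w : ℂ, a < w.re → w.re < b → ‖f w‖ ≤ A * Real.exp (B * Real.exp (γ * |w.im|)))
    (hle_a : ∀ w : ℂ, w.re = a → ‖f w‖ ≤ M) (hle_b : ∀ w : ℂ, w.re = b → ‖f w‖ ≤ M)
    (hza : a ≤ z.re) (hzb : z.re ≤ b) : ‖f z‖ ≤ M := by
  refine vertical_strip (diffContOnCl_re_preimage_Ioo hc hd) ⟨γ, hγ, B, ?_⟩ hle_a hle_b hza hzb
  refine Asymptotics.IsBigO.of_bound A (eventually_inf_principal.2 (Eventually.of_forall ?_))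
  intro w hw
  rw [Real.norm_of_nonneg (Real.exp_pos _).le]
  exact hgrowth w hw.1 hw.2

theorem norm_mul_convexityWeight_le {h : ℂ → ℂ} {W E F A B γ : ℝ} (hW : 1 ≤ W) (hE : 0 ≤ E)
    (hc : ContinuousOn h (re ⁻¹' Icc (-(1/4)) (5/4)))
    (hd : DifferentiableOn ℂ h (re ⁻¹' Ioo (-(1/4)) (5/4))) (hγ : γ < 2 * Real.pi / 3)
    (hgrowth : ∀ s : ℂ, -(1/4) ≤ s.re → s.re ≤ 5/4 →
      ‖h s‖ ≤ A * Real.exp (B * Real.exp (γ * |s.im|)))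
    (hright : ∀ t : ℝ, ‖h ((5/4 : ℂ) + t * I)‖ ≤ F)
    (hleft : ∀ t : ℝ, ‖h ((-(1/4) : ℂ) + t * I)‖ ≤ E * W ^ 3 * ‖1 + t * I‖ ^ 3)
    {z : ℂ} (hz₁ : -(1/4) ≤ z.re) (hz₂ : z.re ≤ 5/4) :
    ‖h z * convexityWeight W z‖ ≤ max F (64 * E) * Real.exp 3 := by
  have hstrip : ∀ w : ℂ, -(1/4) ≤ w.re → w.re ≤ 5/4 → |w.re| ≤ 5 / 4 :=
    fun w h₁ h₂ => abs_le.2 ⟨by linarith, h₂⟩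
  have hG := differentiableOn_convexityWeight (W := W) (by positivity)
  have hsub : re ⁻¹' Icc (-(1/4)) (5/4) ⊆ {z : ℂ | |z.re| < 2} := fun w hw =>
    (hstrip w hw.1 hw.2).trans_lt (by norm_num)
  refine PhragmenLindelof.vertical_strip_of_norm_le (f := fun w => h w * convexityWeight W w)
    (A := A * Real.exp 3) (B := B) (hc.mul (hG.continuousOn.mono hsub))
    (hd.mul (hG.mono (preimage_mono Ioo_subset_Icc_self |>.trans hsub)))
    (hγ.trans_eq (by ring)) (fun w h₁ h₂ => ?_) (fun w hw => ?_) (fun w hw => ?_) hz₁ hz₂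
  · refine (norm_mul_convexityWeight_le_of_norm_le hW (hstrip w h₁.le h₂.le)
      (hgrowth w h₁.le h₂.le)).trans_eq (by ring)
  · have hf := hleft w.im
    rw [show (-(1/4) : ℂ) = w.re by rw [hw]; push_cast; ring, re_add_im] at hf
    have hnorm : ‖1 + w.im * I‖ ≤ 3 + |w.im| :=
      (norm_add_le _ _).trans (by simp)
    calc ‖h w * convexityWeight W w‖ ≤ 64 * E * Real.exp 3 :=
          norm_mul_convexityWeight_le_of_re_eq hW hw (hf.trans (by gcongr))
      _ ≤ max F (64 * E) * Real.exp 3 := by gcongr; exact le_max_right _ _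
  · have hf := hright w.im
    rw [show (5/4 : ℂ) = w.re by rw [hw]; push_cast; ring, re_add_im] at hf
    exact norm_mul_convexityWeight_le_of_norm_le hW (by rw [hw]; norm_num)
      (hf.trans (le_max_left _ _))

theorem convexity_bound_abstract_general (E₀ F₀ : ℝ) (hE₀ : 0 < E₀) :
    ∃ C : ℝ, ∀ (W : ℝ), 1 ≤ W → ∀ (h : ℂ → ℂ),
      ContinuousOn h {s : ℂ | -(1/4) ≤ s.re ∧ s.re ≤ 5/4} →
      DifferentiableOn ℂ h {s : ℂ | -(1/4) < s.re ∧ s.re < 5/4} →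
      ∀ (A B γ : ℝ), 0 ≤ A → 0 ≤ B → 0 < γ → γ < 2 * Real.pi / 3 →
      (∀ s : ℂ, -(1/4) ≤ s.re → s.re ≤ 5/4 →
        ‖h s‖ ≤ A * Real.exp (B * Real.exp (γ * |s.im|))) →
      (∀ t : ℝ, ‖h ((5/4 : ℂ) + t * Complex.I)‖ ≤ F₀) →
      (∀ t : ℝ, ‖h ((-(1/4) : ℂ) + t * Complex.I)‖ ≤
        E₀ * W ^ 3 * ‖1 + t * Complex.I‖ ^ 3) →
      ∀ σ t : ℝ, -(1/4) < σ → σ < 5/4 →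
        ‖h ((σ : ℂ) + t * Complex.I)‖ ≤
          C * W ^ (2 * (5/4 - σ)) * (3 + |t|) ^ (2 * (5/4 - σ)) := by
  refine ⟨max F₀ (64 * E₀) * Real.exp 3 * Real.exp 3, ?_⟩
  intro W hW h hc hd A B γ _ _ _ hγ hgrowth hright hleft σ t hσ₁ hσ₂
  have hre : ((σ : ℂ) + t * I).re = σ := by simp
  have him : ((σ : ℂ) + t * I).im = t := by simp
  have h₁ : -(1/4) ≤ ((σ : ℂ) + t * I).re := hre.symm ▸ hσ₁.le
  have h₂ : ((σ : ℂ) + t * I).re ≤ 5/4 := hre.symm ▸ hσ₂.le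
  have hbound := norm_le_of_norm_mul_convexityWeight_le hW (abs_le.2 ⟨by linarith, h₂⟩)
    (norm_mul_convexityWeight_le hW hE₀.le hc hd hγ hgrowth hright hleft h₁ h₂)
  rw [hre, him, Real.mul_rpow (by positivity) (by positivity)] at hbound
  exact hbound.trans_eq (by ring)

/-- Convexity estimate of Proposition 5.2: an abstract function `h` (playing the role of
`ζ(2s)·R(f,g,s)`), bounded on the edges of the strip `-1/4 ≤ Re s ≤ 5/4` by a constant and by
`E₀·W³·|1+it|³` respectively, satisfies the interpolated bound
`|h(σ+it)| ≤ C·W^{2(5/4−σ)}·(3+|t|)^{2(5/4−σ)}` with `C` depending only on `E₀, F₀`. -/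
theorem convexity_bound_abstract (E₀ F₀ : ℝ) (hE₀ : 0 < E₀) (hF₀ : 0 < F₀) :
    ∃ C : ℝ, ∀ (W : ℝ), 1 ≤ W → ∀ (h : ℂ → ℂ),
      ContinuousOn h {s : ℂ | -(1/4) ≤ s.re ∧ s.re ≤ 5/4} →
      DifferentiableOn ℂ h {s : ℂ | -(1/4) < s.re ∧ s.re < 5/4} →
      ∀ (A B γ : ℝ), 0 ≤ A → 0 ≤ B → 0 < γ → γ < 2 * Real.pi / 3 →
      (∀ s : ℂ, -(1/4) ≤ s.re → s.re ≤ 5/4 →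
        ‖h s‖ ≤ A * Real.exp (B * Real.exp (γ * |s.im|))) →
      (∀ t : ℝ, ‖h ((5/4 : ℂ) + t * Complex.I)‖ ≤ F₀) →
      (∀ t : ℝ, ‖h ((-(1/4) : ℂ) + t * Complex.I)‖ ≤
        E₀ * W ^ 3 * ‖1 + t * Complex.I‖ ^ 3) →
      ∀ σ t : ℝ, -(1/4) < σ → σ < 5/4 →
        ‖h ((σ : ℂ) + t * Complex.I)‖ ≤
          C * W ^ (2 * (5/4 - σ)) * (3 + |t|) ^ (2 * (5/4 - σ)) :=
  convexity_bound_abstract_general E₀ F₀ hE₀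
end

section
/- Let λ, μ : ℕ → ℝ satisfy, for all primes p and all pairs of distinct primes p, q: λ(pq) = λ(p)λ(q), μ(pq) = μ(p)μ(q), λ(p²) = λ(p)² − 1, μ(p²) = μ(p)² − 1, |λ(p)| ≤ 2p^{7/64} and |μ(p)| ≤ 2p^{7/64}. Suppose there exist c₀ > 0 and X₁ ≥ 2 such that for all real y ≥ X₁, Σ_{p≤y} λ(p)² + Σ_{p≤y} μ(p)² − π(y) ≥ c₀·y/log y. Then there exist C > 0 and X₂ ≥ X₁², depending only on c₀ and X₁, such that for every real x ≥ X₂ the following holds: if λ(n)μ(n) ≥ 0 for all integers 1 ≤ n ≤ x, then Σ_{n≤x} λ(n)μ(n) ≥ C·x^{25/32}/(log x)². -/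
private lemma prod_le_of_sq_le' {a b M : ℝ} (h1 : a ^ 2 ≤ M) (h2 : b ^ 2 ≤ M) :
    a * b ≤ M := by nlinarith [sq_nonneg (a - b)]

set_option maxHeartbeats 2000000

private lemma sum_sq_sub_one_le' {a b : ℝ} (h : 0 ≤ (a ^ 2 - 1) * (b ^ 2 - 1)) :
    a ^ 2 + b ^ 2 - 1 ≤ (a * b) ^ 2 := by nlinarith


/-- Proposition 3.2: for Hecke-like coefficients `λ, μ` satisfying the Hecke relations, the
Kim–Sarnak bound `|λ(p)| ≤ 2p^{7/64}`, and the prime-number-theorem input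
`Σ_{p≤y} λ(p)² + Σ_{p≤y} μ(p)² − π(y) ≥ c₀·y/log y` for `y ≥ X₁`, if `λ(n)μ(n) ≥ 0` for all
`n ≤ x` then `Σ_{n≤x} λ(n)μ(n) ≥ C·x^{25/32}/(log x)²` for all sufficiently large `x`. -/
theorem simultaneous_nonnegativity_lower_bound
    (c₀ X₁ : ℝ) (hc₀ : 0 < c₀) (hX₁ : 2 ≤ X₁) :
    ∃ C : ℝ, 0 < C ∧ ∃ X₂ : ℝ, X₁ ^ 2 ≤ X₂ ∧
      ∀ lam mu : ℕ → ℝ,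
      (∀ p q : ℕ, p.Prime → q.Prime → p ≠ q → lam (p * q) = lam p * lam q) →
      (∀ p q : ℕ, p.Prime → q.Prime → p ≠ q → mu (p * q) = mu p * mu q) →
      (∀ p : ℕ, p.Prime → lam (p ^ 2) = lam p ^ 2 - 1) →
      (∀ p : ℕ, p.Prime → mu (p ^ 2) = mu p ^ 2 - 1) →
      (∀ p : ℕ, p.Prime → |lam p| ≤ 2 * (p : ℝ) ^ ((7 : ℝ)/64)) →
      (∀ p : ℕ, p.Prime → |mu p| ≤ 2 * (p : ℝ) ^ ((7 : ℝ)/64)) →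
      (∀ y : ℝ, X₁ ≤ y →
        (∑ p ∈ (Finset.Iic ⌊y⌋₊).filter Nat.Prime, lam p ^ 2) +
          (∑ p ∈ (Finset.Iic ⌊y⌋₊).filter Nat.Prime, mu p ^ 2) -
          (((Finset.Iic ⌊y⌋₊).filter Nat.Prime).card : ℝ)
          ≥ c₀ * y / Real.log y) →
      ∀ x : ℝ, X₂ ≤ x →
        (∀ n : ℕ, 1 ≤ n → (n : ℝ) ≤ x → 0 ≤ lam n * mu n) →
        (∑ n ∈ Finset.Icc 1 ⌊x⌋₊, lam n * mu n) ≥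
          C * x ^ ((25 : ℝ)/32) / (Real.log x) ^ 2 := by
  refine ⟨c₀ ^ 2 / 8, by positivity,
    max (X₁ ^ 2) (((1536 / c₀) ^ 4 + 4) ^ 2), le_max_left _ _, ?_⟩
  intro lam mu hlmul hmmul hlsq hmsq hlbd hmbd hPNT x hx hnn
  set K : ℝ := (1536 / c₀) ^ 4 + 4 with hKdef
  have hK4 : (4 : ℝ) ≤ K := le_add_of_nonneg_left (by positivity)
  have hX₁2x : X₁ ^ 2 ≤ x := le_trans (le_max_left _ _) hx
  have hK2x : K ^ 2 ≤ x := le_trans (le_max_right _ _) hx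
  have hx16 : (16 : ℝ) ≤ x := by
    have h := mul_self_le_mul_self (by norm_num : (0:ℝ) ≤ 4) hK4
    calc (16 : ℝ) = 4 * 4 := by norm_num
      _ ≤ K * K := h
      _ = K ^ 2 := (sq K).symm
      _ ≤ x := hK2x
  have hx0 : (0 : ℝ) < x := by linarith
  have hx1 : (1 : ℝ) ≤ x := by linarith
  set y : ℝ := x ^ ((1 : ℝ)/2) with hydef
  have hy0 : (0 : ℝ) < y := Real.rpow_pos_of_pos hx0 _
  have hyy : y * y = x := by
    rw [hydef, ← Real.rpow_add hx0]; norm_num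
  have hroot : ∀ a : ℝ, 0 ≤ a → a ^ 2 ≤ x → a ≤ y := by
    intro a ha hax
    have h1 : (a ^ 2) ^ ((1 : ℝ)/2) ≤ y := Real.rpow_le_rpow (by positivity) hax (by norm_num)
    rwa [← Real.rpow_natCast a 2, ← Real.rpow_mul ha,
      show ((2 : ℕ) : ℝ) * ((1 : ℝ)/2) = 1 by norm_num, Real.rpow_one] at h1
  have hyX₁ : X₁ ≤ y := hroot X₁ (by linarith) hX₁2x
  have hyK : K ≤ y := hroot K (by linarith) hK2x
  have hy2 : (2 : ℝ) ≤ y := le_trans hX₁ hyX₁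
  have hy1 : (1 : ℝ) ≤ y := by linarith
  have hyx : y ≤ x := by
    calc y = x ^ ((1 : ℝ)/2) := hydef
    _ ≤ x ^ (1 : ℝ) := Real.rpow_le_rpow_of_exponent_le hx1 (by norm_num)
    _ = x := Real.rpow_one x
  set L : ℝ := Real.log y with hLdef
  have hL0 : 0 < L := Real.log_pos (by linarith)
  have hlogx : Real.log x = 2 * L := by
    rw [hLdef, hydef, Real.log_rpow hx0]; ring
  set P := (Finset.Iic ⌊y⌋₊).filter Nat.Prime with hPdef
  have hPmem : ∀ p ∈ P, Nat.Prime p ∧ (p : ℝ) ≤ y := by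
    intro p hp
    rw [hPdef, Finset.mem_filter, Finset.mem_Iic] at hp
    exact ⟨hp.2, le_trans (Nat.cast_le.mpr hp.1) (Nat.floor_le hy0.le)⟩
  set M : ℝ := 4 * y ^ ((7 : ℝ)/32) with hMdef
  have hy732 : (1 : ℝ) ≤ y ^ ((7 : ℝ)/32) := by
    have := Real.rpow_le_rpow_of_exponent_le hy1 (show (0 : ℝ) ≤ 7/32 by norm_num)
    rwa [Real.rpow_zero] at this
  have hy732pos : (0 : ℝ) < y ^ ((7 : ℝ)/32) := by linarith
  have hM0 : (0 : ℝ) < M := by rw [hMdef]; linarith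
  set B : ℝ := Real.sqrt (2 * M) with hBdef
  have hB0 : (0 : ℝ) < B := Real.sqrt_pos.mpr (by linarith)
  have hBB : B * B = 2 * M := Real.mul_self_sqrt (by linarith)
  -- pointwise bounds at primes
  have hsqle : ∀ p ∈ P, lam p ^ 2 ≤ M ∧ mu p ^ 2 ≤ M := by
    intro p hp
    obtain ⟨hpp, hpy⟩ := hPmem p hp
    have hp0 : (0 : ℝ) ≤ (p : ℝ) := Nat.cast_nonneg p
    have hpow : ((p : ℝ) ^ ((7 : ℝ)/64)) ^ 2 = (p : ℝ) ^ ((7 : ℝ)/32) := by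
      rw [← Real.rpow_natCast ((p : ℝ) ^ ((7 : ℝ)/64)) 2, ← Real.rpow_mul hp0]
      norm_num
    have hple : (p : ℝ) ^ ((7 : ℝ)/32) ≤ y ^ ((7 : ℝ)/32) :=
      Real.rpow_le_rpow hp0 hpy (by norm_num)
    constructor
    · have h := hlbd p hpp
      calc lam p ^ 2 = |lam p| ^ 2 := (sq_abs _).symm
        _ ≤ (2 * (p : ℝ) ^ ((7 : ℝ)/64)) ^ 2 := by
            apply pow_le_pow_left₀ (abs_nonneg _) h
        _ = 4 * ((p : ℝ) ^ ((7 : ℝ)/64)) ^ 2 := by ring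
        _ = 4 * (p : ℝ) ^ ((7 : ℝ)/32) := by rw [hpow]
        _ ≤ M := by rw [hMdef]; linarith
    · have h := hmbd p hpp
      calc mu p ^ 2 = |mu p| ^ 2 := (sq_abs _).symm
        _ ≤ (2 * (p : ℝ) ^ ((7 : ℝ)/64)) ^ 2 := by
            apply pow_le_pow_left₀ (abs_nonneg _) h
        _ = 4 * ((p : ℝ) ^ ((7 : ℝ)/64)) ^ 2 := by ring
        _ = 4 * (p : ℝ) ^ ((7 : ℝ)/32) := by rw [hpow]
        _ ≤ M := by rw [hMdef]; linarith
  have ht0 : ∀ p ∈ P, 0 ≤ lam p * mu p := by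
    intro p hp
    obtain ⟨hpp, hpy⟩ := hPmem p hp
    exact hnn p hpp.one_lt.le (le_trans hpy hyx)
  have htM : ∀ p ∈ P, lam p * mu p ≤ M := by
    intro p hp
    obtain ⟨h1, h2⟩ := hsqle p hp
    exact prod_le_of_sq_le' h1 h2
  have hpoint : ∀ p ∈ P, lam p ^ 2 + mu p ^ 2 - 1 ≤ lam p * mu p * B := by
    intro p hp
    obtain ⟨hpp, hpy⟩ := hPmem p hp
    have hab : 0 ≤ lam p * mu p := ht0 p hp
    -- (lam p * mu p)^2 ≥ s  since λ(p²)μ(p²) ≥ 0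
    have hpsqx : ((p ^ 2 : ℕ) : ℝ) ≤ x := by
      push_cast
      calc (p : ℝ) ^ 2 = (p : ℝ) * (p : ℝ) := sq (p : ℝ)
        _ ≤ y * y := mul_le_mul hpy hpy (Nat.cast_nonneg p) hy0.le
        _ = x := hyy
    have hppos : 1 ≤ p ^ 2 := Nat.one_le_pow _ _ hpp.pos
    have hkey := hnn (p ^ 2) hppos hpsqx
    rw [hlsq p hpp, hmsq p hpp] at hkey
    have hkey2 : lam p ^ 2 + mu p ^ 2 - 1 ≤ (lam p * mu p) ^ 2 :=
      sum_sq_sub_one_le' hkey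
    obtain ⟨h1, h2⟩ := hsqle p hp
    have hs2M : lam p ^ 2 + mu p ^ 2 - 1 ≤ 2 * M := by linarith
    rcases le_or_gt (lam p ^ 2 + mu p ^ 2 - 1) 0 with hs | hs
    · exact le_trans hs (by positivity)
    · have hsab : Real.sqrt (lam p ^ 2 + mu p ^ 2 - 1) ≤ lam p * mu p := by
        calc Real.sqrt (lam p ^ 2 + mu p ^ 2 - 1) ≤ Real.sqrt ((lam p * mu p) ^ 2) :=
          Real.sqrt_le_sqrt hkey2
        _ = |lam p * mu p| := Real.sqrt_sq_eq_abs _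
        _ = lam p * mu p := abs_of_nonneg hab
      have hsB : Real.sqrt (lam p ^ 2 + mu p ^ 2 - 1) ≤ B := by
        rw [hBdef]; exact Real.sqrt_le_sqrt hs2M
      calc lam p ^ 2 + mu p ^ 2 - 1
          = Real.sqrt (lam p ^ 2 + mu p ^ 2 - 1) * Real.sqrt (lam p ^ 2 + mu p ^ 2 - 1) :=
            (Real.mul_self_sqrt hs.le).symm
        _ ≤ (lam p * mu p) * B :=
            mul_le_mul hsab hsB (Real.sqrt_nonneg _) hab
  set A : ℝ := ∑ p ∈ P, (lam p ^ 2 + mu p ^ 2 - 1) with hAdef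
  set T : ℝ := ∑ p ∈ P, lam p * mu p with hTdef
  have hA : c₀ * y / L ≤ A := by
    have h := hPNT y hyX₁
    rw [hAdef]
    rw [Finset.sum_sub_distrib, Finset.sum_add_distrib, Finset.sum_const, nsmul_eq_mul, mul_one]
    exact h
  have hT0 : 0 ≤ T := Finset.sum_nonneg ht0
  have hTA : A ≤ T * B := by
    calc A ≤ ∑ p ∈ P, lam p * mu p * B := Finset.sum_le_sum hpoint
      _ = T * B := by rw [hTdef, ← Finset.sum_mul]
  have hR0 : 0 < c₀ * y / L := by positivity
  -- largeness: 2*M*B ≤ c₀*y/L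
  have hsqrt9 : Real.sqrt 9 = 3 := by
    rw [show (9 : ℝ) = 3 ^ 2 by norm_num, Real.sqrt_sq (by norm_num : (0:ℝ) ≤ 3)]
  have hB3 : B ≤ 3 * y ^ ((1 : ℝ)/2) := by
    have h1 : 2 * M ≤ 9 * y := by
      have : y ^ ((7 : ℝ)/32) ≤ y ^ (1 : ℝ) :=
        Real.rpow_le_rpow_of_exponent_le hy1 (by norm_num)
      rw [Real.rpow_one] at this
      rw [hMdef]; linarith
    calc B ≤ Real.sqrt (9 * y) := Real.sqrt_le_sqrt h1
      _ = Real.sqrt 9 * Real.sqrt y := Real.sqrt_mul (by norm_num) y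
      _ = 3 * y ^ ((1 : ℝ)/2) := by rw [hsqrt9, Real.sqrt_eq_rpow]
  have h2MB : 2 * M * B ≤ 24 * y ^ ((23 : ℝ)/32) := by
    have := mul_le_mul_of_nonneg_left hB3 (show (0:ℝ) ≤ 2 * M by linarith)
    calc 2 * M * B ≤ 2 * M * (3 * y ^ ((1 : ℝ)/2)) := this
      _ = 24 * (y ^ ((7 : ℝ)/32) * y ^ ((1 : ℝ)/2)) := by rw [hMdef]; ring
      _ = 24 * y ^ ((23 : ℝ)/32) := by rw [← Real.rpow_add hy0]; norm_num
  have hlog64 : L ≤ 64 * y ^ ((1 : ℝ)/64) := by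
    have h := Real.log_le_rpow_div hy0.le (show (0:ℝ) < 1/64 by norm_num)
    rw [hLdef]
    calc Real.log y ≤ y ^ ((1:ℝ)/64) / (1/64) := h
      _ = 64 * y ^ ((1 : ℝ)/64) := by ring
  have hy14 : 1536 / c₀ ≤ y ^ ((1 : ℝ)/4) := by
    have h1 : ((1536 / c₀) ^ 4 : ℝ) ≤ y := by
      have h0 : ((1536 / c₀) ^ 4 : ℝ) ≤ K := by
        rw [hKdef]; exact le_add_of_nonneg_right (by norm_num)
      exact le_trans h0 hyK
    have h2 : (((1536 / c₀) ^ 4 : ℝ)) ^ ((1 : ℝ)/4) ≤ y ^ ((1 : ℝ)/4) :=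
      Real.rpow_le_rpow (by positivity) h1 (by norm_num)
    rwa [← Real.rpow_natCast (1536 / c₀) 4, ← Real.rpow_mul (by positivity),
      show ((4 : ℕ) : ℝ) * ((1 : ℝ)/4) = 1 by norm_num, Real.rpow_one] at h2
  have hbig : 2 * M * B ≤ c₀ * y / L := by
    have hstep1 : c₀ * y / (64 * y ^ ((1 : ℝ)/64)) ≤ c₀ * y / L :=
      div_le_div_of_nonneg_left (by positivity) hL0 hlog64
    have hstep2 : (24 : ℝ) * y ^ ((23 : ℝ)/32) ≤ c₀ * y / (64 * y ^ ((1 : ℝ)/64)) := by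
      rw [le_div_iff₀ (by positivity)]
      have he : y ^ ((23 : ℝ)/32) * (64 * y ^ ((1 : ℝ)/64)) = 64 * y ^ ((47 : ℝ)/64) := by
        rw [mul_comm, mul_assoc, ← Real.rpow_add hy0]; norm_num
      rw [mul_assoc, he]
      have hy1764 : y ^ ((1 : ℝ)/4) ≤ y ^ ((17 : ℝ)/64) :=
        Real.rpow_le_rpow_of_exponent_le hy1 (by norm_num)
      have hkey : 1536 ≤ c₀ * y ^ ((17 : ℝ)/64) := by
        have := le_trans hy14 hy1764
        calc (1536 : ℝ) = c₀ * (1536 / c₀) := by field_simp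
          _ ≤ c₀ * y ^ ((17 : ℝ)/64) := by
              apply mul_le_mul_of_nonneg_left (le_trans hy14 hy1764) hc₀.le
      have hsplit : c₀ * y = c₀ * y ^ ((17 : ℝ)/64) * y ^ ((47 : ℝ)/64) := by
        rw [mul_assoc, ← Real.rpow_add hy0]
        norm_num
      rw [hsplit]
      have h47 : (0:ℝ) < y ^ ((47 : ℝ)/64) := Real.rpow_pos_of_pos hy0 _
      calc (24 : ℝ) * (64 * y ^ ((47 : ℝ)/64)) = 1536 * y ^ ((47 : ℝ)/64) := by ring
        _ ≤ c₀ * y ^ ((17 : ℝ)/64) * y ^ ((47 : ℝ)/64) :=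
            mul_le_mul_of_nonneg_right hkey h47.le
    exact le_trans (le_trans h2MB hstep2) hstep1
  have hTM : 2 * M ≤ T := by
    have h1 : 2 * M * B ≤ T * B := le_trans hbig (le_trans hA hTA)
    exact le_of_mul_le_mul_right h1 hB0
  have hTsq : ∑ p ∈ P, (lam p * mu p) ^ 2 ≤ M * T := by
    calc ∑ p ∈ P, (lam p * mu p) ^ 2 ≤ ∑ p ∈ P, M * (lam p * mu p) := by
          apply Finset.sum_le_sum
          intro p hp
          have := ht0 p hp
          have := htM p hp
          nlinarith
      _ = M * T := by rw [hTdef, Finset.mul_sum]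
  -- the pair sum
  set Q := P.offDiag.filter (fun z => z.1 < z.2) with hQdef
  set g : ℕ × ℕ → ℝ := fun z => (lam z.1 * mu z.1) * (lam z.2 * mu z.2) with hgdef
  have hTT : T * T = (∑ p ∈ P, (lam p * mu p) ^ 2) + 2 * ∑ z ∈ Q, g z := by
    have h1 : T * T = ∑ z ∈ P ×ˢ P, g z := by
      rw [Finset.sum_product, hTdef, Finset.sum_mul_sum]
    have h2 : ∑ z ∈ P ×ˢ P, g z = ∑ z ∈ P.diag, g z + ∑ z ∈ P.offDiag, g z := by
      rw [← Finset.sum_union (Finset.disjoint_diag_offDiag P), Finset.diag_union_offDiag]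
    have h3 : ∑ z ∈ P.diag, g z = ∑ p ∈ P, (lam p * mu p) ^ 2 := by
      rw [Finset.sum_diag]
      exact Finset.sum_congr rfl (fun p _ => by rw [hgdef]; ring)
    have h4 : ∑ z ∈ P.offDiag, g z = 2 * ∑ z ∈ Q, g z := by
      rw [← Finset.sum_filter_add_sum_filter_not P.offDiag (fun z => z.1 < z.2) g]
      have hswap : ∑ z ∈ P.offDiag.filter (fun z => ¬ z.1 < z.2), g z = ∑ z ∈ Q, g z := by
        apply Finset.sum_nbij' (fun z : ℕ × ℕ => (z.2, z.1)) (fun z : ℕ × ℕ => (z.2, z.1))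
        · intro z hz
          simp only [hQdef, Finset.mem_filter, Finset.mem_offDiag] at hz ⊢
          obtain ⟨⟨h1, h2, h3⟩, h4⟩ := hz
          exact ⟨⟨h2, h1, fun he => h3 he.symm⟩, lt_of_le_of_ne (not_lt.mp h4) (fun he => h3 he.symm)⟩
        · intro z hz
          simp only [hQdef, Finset.mem_filter, Finset.mem_offDiag] at hz ⊢
          obtain ⟨⟨h1, h2, h3⟩, h4⟩ := hz
          exact ⟨⟨h2, h1, fun he => h3 he.symm⟩, not_lt.mpr h4.le⟩
        · intro z _; rfl
        · intro z _; rfl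
        · intro z _; rw [hgdef]; ring
      rw [hswap]; ring
    rw [h1, h2, h3, h4]
  have hQnonneg : 0 ≤ ∑ z ∈ Q, g z := by
    apply Finset.sum_nonneg
    intro z hz
    rw [hQdef, Finset.mem_filter, Finset.mem_offDiag] at hz
    exact mul_nonneg (ht0 _ hz.1.1) (ht0 _ hz.1.2.1)
  have hinj : ∀ z ∈ Q, ∀ w ∈ Q, z.1 * z.2 = w.1 * w.2 → z = w := by
    intro z hz w hw h
    rw [hQdef, Finset.mem_filter, Finset.mem_offDiag] at hz hw
    obtain ⟨⟨hz1, hz2, _⟩, hzlt⟩ := hz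
    obtain ⟨⟨hw1, hw2, _⟩, hwlt⟩ := hw
    have pz1 := (hPmem _ hz1).1
    have pz2 := (hPmem _ hz2).1
    have pw1 := (hPmem _ hw1).1
    have pw2 := (hPmem _ hw2).1
    have hd : w.1 ∣ z.1 * z.2 := ⟨w.2, h⟩
    rcases (Nat.Prime.dvd_mul pw1).mp hd with h1 | h2
    · have e1 : w.1 = z.1 := (Nat.prime_dvd_prime_iff_eq pw1 pz1).mp h1
      have e2 : z.2 = w.2 := by
        apply Nat.eq_of_mul_eq_mul_left pz1.pos
        rw [h, e1]
      exact Prod.ext e1.symm e2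
    · have e1 : w.1 = z.2 := (Nat.prime_dvd_prime_iff_eq pw1 pz2).mp h2
      have e2 : z.1 = w.2 := by
        apply Nat.eq_of_mul_eq_mul_left pz2.pos
        rw [mul_comm z.2 z.1, h, e1]
      exfalso
      have hcon : z.1 < z.1 := by
        calc z.1 < z.2 := hzlt
          _ = w.1 := e1.symm
          _ < w.2 := hwlt
          _ = z.1 := e2.symm
      exact lt_irrefl _ hcon
  have himg : Q.image (fun z : ℕ × ℕ => z.1 * z.2) ⊆ Finset.Icc 1 ⌊x⌋₊ := by
    intro n hn
    rw [Finset.mem_image] at hn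
    obtain ⟨z, hz, rfl⟩ := hn
    rw [hQdef, Finset.mem_filter, Finset.mem_offDiag] at hz
    obtain ⟨⟨hz1, hz2, _⟩, _⟩ := hz
    obtain ⟨pz1, hy1'⟩ := hPmem _ hz1
    obtain ⟨pz2, hy2'⟩ := hPmem _ hz2
    rw [Finset.mem_Icc]
    constructor
    · exact Nat.one_le_iff_ne_zero.mpr (Nat.mul_ne_zero pz1.pos.ne' pz2.pos.ne')
    · apply Nat.le_floor
      push_cast
      calc (z.1 : ℝ) * (z.2 : ℝ) ≤ y * y :=
          mul_le_mul hy1' hy2' (Nat.cast_nonneg _) hy0.le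
        _ = x := hyy
  have hmain1 : ∑ z ∈ Q, g z ≤ ∑ n ∈ Finset.Icc 1 ⌊x⌋₊, lam n * mu n := by
    have heq : ∑ n ∈ Q.image (fun z : ℕ × ℕ => z.1 * z.2), lam n * mu n = ∑ z ∈ Q, g z := by
      rw [Finset.sum_image hinj]
      apply Finset.sum_congr rfl
      intro z hz
      rw [hQdef, Finset.mem_filter, Finset.mem_offDiag] at hz
      obtain ⟨⟨hz1, hz2, hne⟩, _⟩ := hz
      rw [hgdef, hlmul z.1 z.2 (hPmem _ hz1).1 (hPmem _ hz2).1 hne,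
        hmmul z.1 z.2 (hPmem _ hz1).1 (hPmem _ hz2).1 hne]
      ring
    rw [← heq]
    apply Finset.sum_le_sum_of_subset_of_nonneg himg
    intro n hn _
    rw [Finset.mem_Icc] at hn
    apply hnn n hn.1
    calc (n : ℝ) ≤ (⌊x⌋₊ : ℝ) := Nat.cast_le.mpr hn.2
      _ ≤ x := Nat.floor_le hx0.le
  set S : ℝ := ∑ n ∈ Finset.Icc 1 ⌊x⌋₊, lam n * mu n with hSdef
  have hS0 : 0 ≤ S := le_trans hQnonneg hmain1
  -- A * A ≤ 8 * M * S
  have hQT : T * T ≤ 4 * ∑ z ∈ Q, g z := by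
    have h1 : 2 * M * T ≤ T * T := mul_le_mul_of_nonneg_right hTM hT0
    linarith only [hTT, hTsq, h1]
  have hAAS : A * A ≤ 8 * (M * S) := by
    have hA0 : 0 ≤ A := le_trans hR0.le hA
    have h1 : A * A ≤ (T * B) * (T * B) := mul_le_mul hTA hTA hA0 (by positivity)
    have h2 : (T * B) * (T * B) = (T * T) * (2 * M) := by
      rw [show (T * B) * (T * B) = (T * T) * (B * B) by ring, hBB]
    have h3 : (T * T) * (2 * M) ≤ (4 * ∑ z ∈ Q, g z) * (2 * M) :=
      mul_le_mul_of_nonneg_right hQT (by linarith only [hM0])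
    have h4 : ∑ z ∈ Q, g z ≤ S := hmain1
    have h5 : (4 * ∑ z ∈ Q, g z) * (2 * M) ≤ (4 * S) * (2 * M) :=
      mul_le_mul_of_nonneg_right (by linarith only [h4]) (by linarith only [hM0])
    calc A * A ≤ (T * B) * (T * B) := h1
      _ = (T * T) * (2 * M) := h2
      _ ≤ (4 * ∑ z ∈ Q, g z) * (2 * M) := h3
      _ ≤ (4 * S) * (2 * M) := h5
      _ = 8 * (M * S) := by ring
  -- conclude
  have hAL : c₀ * y ≤ A * L := by
    rw [div_le_iff₀ hL0] at hA
    exact hA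
  have hcc : c₀ ^ 2 * (y * y) ≤ 8 * (M * S) * (L * L) := by
    have h1 : (c₀ * y) * (c₀ * y) ≤ (A * L) * (A * L) :=
      mul_self_le_mul_self (by positivity) hAL
    have h2 : (A * L) * (A * L) = (A * A) * (L * L) := by ring
    have h3 : (A * A) * (L * L) ≤ (8 * (M * S)) * (L * L) :=
      mul_le_mul_of_nonneg_right hAAS (by positivity)
    calc c₀ ^ 2 * (y * y) = (c₀ * y) * (c₀ * y) := by ring
      _ ≤ (A * L) * (A * L) := h1
      _ = (A * A) * (L * L) := by ring
      _ ≤ (8 * (M * S)) * (L * L) := h3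
      _ = 8 * (M * S) * (L * L) := by ring
  have hx2532 : x ^ ((25 : ℝ)/32) * y ^ ((7 : ℝ)/32) ≤ y * y := by
    have e7 : y ^ ((7 : ℝ)/32) = x ^ ((7 : ℝ)/64) := by
      rw [hydef, ← Real.rpow_mul hx0.le]; norm_num
    rw [e7, hyy, ← Real.rpow_add hx0]
    calc x ^ ((25 : ℝ)/32 + (7 : ℝ)/64) ≤ x ^ (1 : ℝ) :=
        Real.rpow_le_rpow_of_exponent_le hx1 (by norm_num)
      _ = x := Real.rpow_one x
  rw [ge_iff_le, hlogx, div_le_iff₀ (by positivity)]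
  -- goal : c₀^2/8 * x^(25/32) ≤ S * (2*L)^2
  have hfin : c₀ ^ 2 * x ^ ((25 : ℝ)/32) * y ^ ((7 : ℝ)/32) ≤
      (S * (2 * L) ^ 2 * 8) * y ^ ((7 : ℝ)/32) := by
    calc c₀ ^ 2 * x ^ ((25 : ℝ)/32) * y ^ ((7 : ℝ)/32)
        ≤ c₀ ^ 2 * (y * y) := by
          rw [mul_assoc]
          exact mul_le_mul_of_nonneg_left hx2532 (by positivity)
      _ ≤ 8 * (M * S) * (L * L) := hcc
      _ = (S * (2 * L) ^ 2 * 8) * y ^ ((7 : ℝ)/32) := by rw [hMdef]; ring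
  have hfin2 : c₀ ^ 2 * x ^ ((25 : ℝ)/32) ≤ S * (2 * L) ^ 2 * 8 :=
    le_of_mul_le_mul_right hfin hy732pos
  linarith only [hfin2]
end

section
/- Let λ, μ : ℕ → ℝ satisfy, for all primes p and all pairs of distinct primes p, q: λ(pq) = λ(p)λ(q), μ(pq) = μ(p)μ(q), λ(p²) = λ(p)² − 1, μ(p²) = μ(p)² − 1, |λ(p)| ≤ 2 and |μ(p)| ≤ 2. Suppose there exist c₀ > 0 and X₁ ≥ 2 such that for all real y ≥ X₁, Σ_{p≤y} λ(p)² + Σ_{p≤y} μ(p)² − π(y) ≥ c₀·y/log y. Then there exist C > 0 and X₂ ≥ X₁², depending only on c₀ and X₁, such that for every real x ≥ X₂ the following holds: if λ(n)μ(n) ≥ 0 for all integers 1 ≤ n ≤ x, then Σ_{n≤x} λ(n)μ(n) ≥ C·x/(log x)². -/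
open Finset

private lemma aux_log_le_two_sqrt {y : ℝ} (hy : 1 ≤ y) :
    Real.log y ≤ 2 * Real.sqrt y := by
  have h0 : (0:ℝ) < y := by linarith
  have hs : 0 < Real.sqrt y := Real.sqrt_pos.mpr h0
  have h1 : Real.log (Real.sqrt y) ≤ Real.sqrt y - 1 :=
    Real.log_le_sub_one_of_pos hs
  have h2 : Real.log (Real.sqrt y) = Real.log y / 2 := Real.log_sqrt (le_of_lt h0)
  linarith

private lemma aux_prime_mul_inj {p q p' q' : ℕ} (hp : p.Prime) (hq : q.Prime)
    (hp' : p'.Prime) (hq' : q'.Prime) (h1 : p < q) (h2 : p' < q')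
    (h : p * q = p' * q') : p = p' ∧ q = q' := by
  have hd : p ∣ p' * q' := h ▸ Dvd.intro q rfl
  rcases (Nat.Prime.dvd_mul hp).mp hd with hpp | hpq
  · have hep : p = p' := (Nat.prime_dvd_prime_iff_eq hp hp').mp hpp
    subst hep
    exact ⟨rfl, Nat.eq_of_mul_eq_mul_left hp.pos h⟩
  · have hep : p = q' := (Nat.prime_dvd_prime_iff_eq hp hq').mp hpq
    have hd' : p' ∣ p * q := h ▸ Dvd.intro q' rfl
    rcases (Nat.Prime.dvd_mul hp').mp hd' with hp1 | hp2
    · have : p' = p := (Nat.prime_dvd_prime_iff_eq hp' hp).mp hp1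
      omega
    · have : p' = q := (Nat.prime_dvd_prime_iff_eq hp' hq).mp hp2
      omega

private lemma aux_cheb_upper {y : ℝ} (hy : 16 ≤ y) :
    ((((Finset.Iic ⌊y⌋₊).filter Nat.Prime).card) : ℝ) ≤ 6 * y / Real.log y := by
  have hy0 : (0:ℝ) < y := by linarith
  have hy1 : (1:ℝ) < y := by linarith
  have hlogy : 0 < Real.log y := Real.log_pos hy1
  set N := ⌊y⌋₊ with hNdef
  have hNy : (N : ℝ) ≤ y := Nat.floor_le (le_of_lt hy0)
  have hyN1 : y < (N : ℝ) + 1 := Nat.lt_floor_add_one y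
  set m := Nat.sqrt N with hmdef
  set P := (Finset.Iic N).filter Nat.Prime with hPdef
  -- split
  have hsplit : (P.filter (fun p => p ≤ m)).card + (P.filter (fun p => ¬ p ≤ m)).card = P.card :=
    Finset.card_filter_add_card_filter_not _
  set k := (P.filter (fun p => ¬ p ≤ m)).card with hkdef
  -- small primes bound
  have hsmall : (P.filter (fun p => p ≤ m)).card ≤ m + 1 := by
    have : (P.filter (fun p => p ≤ m)) ⊆ Finset.Iic m := by
      intro p hp
      simp only [Finset.mem_filter] at hp
      exact Finset.mem_Iic.mpr hp.2
    simpa using Finset.card_le_card this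
  -- big primes: (m+1)^k ≤ 4^N
  have hbig : (m + 1) ^ k ≤ 4 ^ N := by
    have h1 : (m + 1) ^ k ≤ ∏ p ∈ P.filter (fun p => ¬ p ≤ m), p := by
      apply Finset.pow_card_le_prod
      intro p hp
      simp only [Finset.mem_filter, not_le] at hp
      omega
    have h2 : (∏ p ∈ P.filter (fun p => ¬ p ≤ m), p) ≤ ∏ p ∈ P, p := by
      apply Finset.prod_le_prod_of_subset_of_one_le' (Finset.filter_subset _ _)
      intro p hp _
      simp only [hPdef, Finset.mem_filter] at hp
      exact hp.2.one_lt.le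
    have h3 : (∏ p ∈ P, p) = primorial N := by
      rw [primorial, hPdef]
      apply Finset.prod_congr _ (fun _ _ => rfl)
      ext p
      simp [Nat.lt_succ_iff]
    calc (m+1)^k ≤ ∏ p ∈ P.filter (fun p => ¬ p ≤ m), p := h1
      _ ≤ ∏ p ∈ P, p := h2
      _ = primorial N := h3
      _ ≤ 4 ^ N := primorial_le_4_pow N
  -- log of big bound
  have hm1 : (1:ℝ) < (m:ℝ) + 1 := by
    have : 1 ≤ m := by
      have : 16 ≤ N := Nat.le_floor (by exact_mod_cast hy)
      have := Nat.sqrt_le_sqrt this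
      simpa [hmdef] using le_trans (by norm_num : 1 ≤ Nat.sqrt 16) this
    have h1 : (1:ℝ) ≤ (m:ℝ) := by exact_mod_cast this
    linarith
  have hlogm : Real.log y < 2 * Real.log ((m:ℝ) + 1) := by
    have hsq : y < ((m:ℝ) + 1) ^ 2 := by
      have hnat : N + 1 ≤ (m + 1) ^ 2 := Nat.lt_succ_sqrt' N
      have : ((N:ℝ) + 1) ≤ ((m:ℝ) + 1) ^ 2 := by exact_mod_cast hnat
      linarith
    calc Real.log y < Real.log (((m:ℝ)+1)^2) := Real.log_lt_log hy0 hsq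
      _ = 2 * Real.log ((m:ℝ)+1) := by rw [Real.log_pow]; push_cast; ring
  have hlogm0 : 0 < Real.log ((m:ℝ) + 1) := Real.log_pos hm1
  have hklog : (k : ℝ) * Real.log ((m:ℝ)+1) ≤ (N:ℝ) * Real.log 4 := by
    have hcast : (((m:ℝ)+1)) ^ k ≤ (4:ℝ) ^ N := by exact_mod_cast hbig
    have := Real.log_le_log (by positivity) hcast
    rwa [Real.log_pow, Real.log_pow] at this
  -- k bound
  have hlog4 : Real.log 4 ≤ 1.4 := by
    have h2 : Real.log 4 = 2 * Real.log 2 := by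
      rw [show (4:ℝ) = 2 ^ 2 by norm_num, Real.log_pow]; push_cast; ring
    have := Real.log_two_lt_d9
    linarith
  have hk : (k : ℝ) ≤ 3 * y / Real.log y := by
    have hky : (k:ℝ) * Real.log y ≤ 3 * y := by
      have c1 : (k:ℝ) * Real.log y ≤ (k:ℝ) * (2 * Real.log ((m:ℝ)+1)) := by
        apply mul_le_mul_of_nonneg_left (le_of_lt hlogm) (Nat.cast_nonneg k)
      have c2 : (k:ℝ) * (2 * Real.log ((m:ℝ)+1)) ≤ 2 * ((N:ℝ) * Real.log 4) := by
        nlinarith [hklog]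
      have c3 : 2 * ((N:ℝ) * Real.log 4) ≤ 3 * y := by
        nlinarith [Nat.cast_nonneg (α := ℝ) N, Real.log_nonneg (by norm_num : (1:ℝ) ≤ 4)]
      linarith
    rw [le_div_iff₀ hlogy]
    linarith
  -- small bound
  have hsqy : (4:ℝ) ≤ Real.sqrt y := by
    have : Real.sqrt 16 ≤ Real.sqrt y := Real.sqrt_le_sqrt hy
    rwa [show (16:ℝ) = 4^2 by norm_num, Real.sqrt_sq (by norm_num : (0:ℝ) ≤ 4)] at this
  have hmy : (m : ℝ) ≤ Real.sqrt y := by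
    have h1 : ((m:ℝ))^2 ≤ y := by
      have : m^2 ≤ N := Nat.sqrt_le' N
      have : ((m:ℝ))^2 ≤ (N:ℝ) := by exact_mod_cast this
      linarith
    calc (m:ℝ) = Real.sqrt ((m:ℝ)^2) := (Real.sqrt_sq (Nat.cast_nonneg m)).symm
      _ ≤ Real.sqrt y := Real.sqrt_le_sqrt h1
  have hsmallR : ((m:ℝ) + 1) ≤ 3 * y / Real.log y := by
    have hlogsq : Real.log y ≤ 2 * Real.sqrt y := aux_log_le_two_sqrt (le_of_lt hy1)
    have hss : Real.sqrt y * Real.sqrt y = y := Real.mul_self_sqrt (le_of_lt hy0)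
    rw [le_div_iff₀ hlogy]
    nlinarith [hsqy, hmy, hlogy, Real.sqrt_nonneg y]
  -- combine
  have hcard : (P.card : ℝ) ≤ ((m:ℝ)+1) + (k:ℝ) := by
    have : P.card ≤ (m+1) + k := by omega
    exact_mod_cast this
  have : ((P.card : ℝ)) ≤ 6 * y / Real.log y := by
    calc (P.card : ℝ) ≤ ((m:ℝ)+1) + (k:ℝ) := hcard
      _ ≤ 3 * y / Real.log y + 3 * y / Real.log y := add_le_add hsmallR hk
      _ = 6 * y / Real.log y := by ring
  exact this

set_option maxHeartbeats 1000000

private lemma aux_final {c₀ y Ly N T x : ℝ} (hc₀ : 0 < c₀) (hy : 0 < y) (hLy : 0 < Ly)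
    (hyy : y * y = x) (hNy : c₀ * y ≤ 14 * N * Ly) (hN2 : 2 ≤ N)
    (hT : N * N - N ≤ 2 * T) {Lx : ℝ} (hLx : Lx = 2 * Ly) :
    c₀ ^ 3 / 2352 * x ≤ c₀ / 12 * T * Lx ^ 2 := by
  have hT4 : N * N / 4 ≤ T := by nlinarith
  have h1 : c₀ * c₀ * x ≤ 196 * (N * N) * (Ly * Ly) := by
    nlinarith [mul_self_le_mul_self (show (0:ℝ) ≤ c₀ * y by positivity) hNy]
  subst hLx
  nlinarith [mul_le_mul_of_nonneg_right hT4 (mul_pos hLy hLy).le,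
    mul_le_mul_of_nonneg_left h1 hc₀.le, sq_nonneg Ly, hN2]



/-- Remark after Proposition 3.2: for Hecke-like coefficients `λ, μ` satisfying the Hecke relations, the
Ramanujan bound `|λ(p)| ≤ 2`, and the prime-number-theorem input
`Σ_{p≤y} λ(p)² + Σ_{p≤y} μ(p)² − π(y) ≥ c₀·y/log y` for `y ≥ X₁`, if `λ(n)μ(n) ≥ 0` for all
`n ≤ x` then `Σ_{n≤x} λ(n)μ(n) ≥ C·x/(log x)²` for all sufficiently large `x`. -/
theorem simultaneous_nonnegativity_lower_bound_ramanujan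
    (c₀ X₁ : ℝ) (hc₀ : 0 < c₀) (hX₁ : 2 ≤ X₁) :
    ∃ C : ℝ, 0 < C ∧ ∃ X₂ : ℝ, X₁ ^ 2 ≤ X₂ ∧
      ∀ lam mu : ℕ → ℝ,
      (∀ p q : ℕ, p.Prime → q.Prime → p ≠ q → lam (p * q) = lam p * lam q) →
      (∀ p q : ℕ, p.Prime → q.Prime → p ≠ q → mu (p * q) = mu p * mu q) →
      (∀ p : ℕ, p.Prime → lam (p ^ 2) = lam p ^ 2 - 1) →
      (∀ p : ℕ, p.Prime → mu (p ^ 2) = mu p ^ 2 - 1) →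
      (∀ p : ℕ, p.Prime → |lam p| ≤ 2) →
      (∀ p : ℕ, p.Prime → |mu p| ≤ 2) →
      (∀ y : ℝ, X₁ ≤ y →
        (∑ p ∈ (Finset.Iic ⌊y⌋₊).filter Nat.Prime, lam p ^ 2) +
          (∑ p ∈ (Finset.Iic ⌊y⌋₊).filter Nat.Prime, mu p ^ 2) -
          (((Finset.Iic ⌊y⌋₊).filter Nat.Prime).card : ℝ)
          ≥ c₀ * y / Real.log y) →
      ∀ x : ℝ, X₂ ≤ x →
        (∀ n : ℕ, 1 ≤ n → (n : ℝ) ≤ x → 0 ≤ lam n * mu n) →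
        (∑ n ∈ Finset.Icc 1 ⌊x⌋₊, lam n * mu n) ≥
          C * x / (Real.log x) ^ 2 := by
  refine ⟨c₀ ^ 3 / 2352, by positivity, max (X₁ ^ 2) (max 65536 ((56 / c₀) ^ 4)),
    le_max_left _ _, ?_⟩
  intro lam mu hlam_mul hmu_mul hlam_sq hmu_sq hlam_bd hmu_bd hPNT x hx hnonneg
  have hx65536 : (65536 : ℝ) ≤ x := le_trans (le_trans (le_max_left _ _) (le_max_right _ _)) hx
  have hx56 : (56 / c₀) ^ 4 ≤ x := le_trans (le_trans (le_max_right _ _) (le_max_right _ _)) hx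
  have hxX1 : X₁ ^ 2 ≤ x := le_trans (le_max_left _ _) hx
  have hx0 : (0:ℝ) ≤ x := by linarith
  have hx1 : (1:ℝ) ≤ x := by linarith
  set y := Real.sqrt x with hydef
  have hyy : y * y = x := Real.mul_self_sqrt hx0
  have hy16 : (16:ℝ) ≤ y := by
    have : Real.sqrt (16^2) ≤ Real.sqrt x := Real.sqrt_le_sqrt (by norm_num; linarith)
    rwa [Real.sqrt_sq (by norm_num : (0:ℝ) ≤ 16)] at this
  have hy0 : (0:ℝ) < y := by linarith
  have hyX1 : X₁ ≤ y := by
    have : Real.sqrt (X₁^2) ≤ Real.sqrt x := Real.sqrt_le_sqrt hxX1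
    rwa [Real.sqrt_sq (by linarith)] at this
  have hylogpos : 0 < Real.log y := Real.log_pos (by linarith)
  have hylex : y ≤ x := by nlinarith
  have hsy56 : 56 / c₀ ≤ Real.sqrt y := by
    have h1 : Real.sqrt ((56/c₀)^4) ≤ y := by
      rw [hydef]; exact Real.sqrt_le_sqrt hx56
    have h2 : Real.sqrt ((56/c₀)^4) = (56/c₀)^2 := by
      rw [show ((56/c₀):ℝ)^4 = ((56/c₀)^2)^2 by ring]
      exact Real.sqrt_sq (by positivity)
    have h3 : (56/c₀)^2 ≤ y := by rw [h2] at h1; exact h1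
    have : Real.sqrt ((56/c₀)^2) ≤ Real.sqrt y := Real.sqrt_le_sqrt h3
    rwa [Real.sqrt_sq (by positivity)] at this
  have hsyy : Real.sqrt y * Real.sqrt y = y := Real.mul_self_sqrt (le_of_lt hy0)
  have hlogy2s : Real.log y ≤ 2 * Real.sqrt y := aux_log_le_two_sqrt (by linarith)
  set δ := c₀ / 12 with hδdef
  have hδ0 : 0 < δ := by positivity
  set P := (Finset.Iic ⌊y⌋₊).filter Nat.Prime with hPdef
  set S := P.filter (fun p => 1 + δ ≤ lam p ^ 2 + mu p ^ 2) with hSdef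
  -- the PNT input rewritten
  have hsum : c₀ * y / Real.log y ≤ ∑ p ∈ P, (lam p ^ 2 + mu p ^ 2 - 1) := by
    have h := hPNT y hyX1
    have e : ∑ p ∈ P, (lam p ^ 2 + mu p ^ 2 - 1)
        = (∑ p ∈ P, lam p ^ 2) + (∑ p ∈ P, mu p ^ 2) - (P.card : ℝ) := by
      rw [Finset.sum_sub_distrib, Finset.sum_add_distrib, Finset.sum_const,
        nsmul_eq_mul, mul_one]
    rw [e]; exact h
  -- bounds for terms
  have hterm7 : ∀ p ∈ P, lam p ^ 2 + mu p ^ 2 - 1 ≤ 7 := by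
    intro p hp
    have hpp : p.Prime := (Finset.mem_filter.mp hp).2
    have h1 : lam p ^ 2 ≤ 4 := by
      have := hlam_bd p hpp
      nlinarith [abs_nonneg (lam p), sq_abs (lam p)]
    have h2 : mu p ^ 2 ≤ 4 := by
      have := hmu_bd p hpp
      nlinarith [abs_nonneg (mu p), sq_abs (mu p)]
    linarith
  -- split the sum
  have hsplit : ∑ p ∈ P, (lam p ^ 2 + mu p ^ 2 - 1)
      = (∑ p ∈ S, (lam p ^ 2 + mu p ^ 2 - 1))
        + ∑ p ∈ P.filter (fun p => ¬ (1 + δ ≤ lam p ^ 2 + mu p ^ 2)),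
            (lam p ^ 2 + mu p ^ 2 - 1) :=
    (Finset.sum_filter_add_sum_filter_not P _ _).symm
  have hSsum : (∑ p ∈ S, (lam p ^ 2 + mu p ^ 2 - 1)) ≤ 7 * (S.card : ℝ) := by
    have := Finset.sum_le_card_nsmul S (fun p => lam p ^ 2 + mu p ^ 2 - 1) 7
      (fun p hp => by
        show lam p ^ 2 + mu p ^ 2 - 1 ≤ 7
        exact hterm7 p (Finset.mem_filter.mp hp).1)
    rw [nsmul_eq_mul] at this
    linarith
  have hCsum : (∑ p ∈ P.filter (fun p => ¬ (1 + δ ≤ lam p ^ 2 + mu p ^ 2)),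
      (lam p ^ 2 + mu p ^ 2 - 1)) ≤ δ * (P.card : ℝ) := by
    have h1 := Finset.sum_le_card_nsmul
      (P.filter (fun p => ¬ (1 + δ ≤ lam p ^ 2 + mu p ^ 2)))
      (fun p => lam p ^ 2 + mu p ^ 2 - 1) δ
      (fun p hp => by
        show lam p ^ 2 + mu p ^ 2 - 1 ≤ δ
        have := (Finset.mem_filter.mp hp).2
        push_neg at this
        linarith)
    rw [nsmul_eq_mul] at h1
    have h2 : ((P.filter (fun p => ¬ (1 + δ ≤ lam p ^ 2 + mu p ^ 2))).card : ℝ)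
        ≤ (P.card : ℝ) := by
      exact_mod_cast Finset.card_le_card (Finset.filter_subset _ _)
    nlinarith
  have hPcard : (P.card : ℝ) ≤ 6 * y / Real.log y := aux_cheb_upper hy16
  -- lower bound on S.card
  have hNlow : c₀ * y / Real.log y ≤ 14 * (S.card : ℝ) := by
    have e1 : δ * (6 * y / Real.log y) = (c₀ / 2) * (y / Real.log y) := by
      rw [hδdef]; ring
    have e2 : c₀ * y / Real.log y = c₀ * (y / Real.log y) := by ring
    have hL0 : 0 ≤ y / Real.log y := by positivity
    nlinarith [hsum, hsplit, hSsum, hCsum, hPcard, hδ0.le]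
  have hNy : c₀ * y ≤ 14 * (S.card : ℝ) * Real.log y := by
    rw [div_le_iff₀ hylogpos] at hNlow; linarith
  have hN2 : (2 : ℝ) ≤ (S.card : ℝ) := by
    have h56 : 56 ≤ c₀ * Real.sqrt y := by
      rw [div_le_iff₀ hc₀] at hsy56; linarith [mul_comm c₀ (Real.sqrt y)]
    nlinarith [Real.sqrt_nonneg y, hylogpos]
  -- each good prime has lam p * mu p ≥ sqrt δ
  have hgood : ∀ p ∈ S, Real.sqrt δ ≤ lam p * mu p := by
    intro p hp
    obtain ⟨hpP, hpδ⟩ := Finset.mem_filter.mp hp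
    obtain ⟨hple, hpprime⟩ := Finset.mem_filter.mp hpP
    have hpley : (p : ℝ) ≤ y :=
      le_trans (Nat.cast_le.mpr (Finset.mem_Iic.mp hple)) (Nat.floor_le (le_of_lt hy0))
    have ha0 : 0 ≤ lam p * mu p :=
      hnonneg p hpprime.one_lt.le (le_trans hpley hylex)
    have hp2x : ((p ^ 2 : ℕ) : ℝ) ≤ x := by
      push_cast
      nlinarith [Nat.cast_nonneg (α := ℝ) p]
    have hp2 : 0 ≤ lam (p ^ 2) * mu (p ^ 2) :=
      hnonneg (p ^ 2) (Nat.one_le_two_pow.trans (Nat.pow_le_pow_left hpprime.two_le 2)) hp2x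
    rw [hlam_sq p hpprime, hmu_sq p hpprime] at hp2
    have hkey : δ ≤ (lam p * mu p) ^ 2 := by nlinarith
    calc Real.sqrt δ ≤ Real.sqrt ((lam p * mu p) ^ 2) := Real.sqrt_le_sqrt hkey
      _ = lam p * mu p := Real.sqrt_sq ha0
  -- primes in S are prime and ≤ y
  have hSprime : ∀ p ∈ S, p.Prime := fun p hp =>
    (Finset.mem_filter.mp (Finset.mem_filter.mp hp).1).2
  have hSley : ∀ p ∈ S, (p : ℝ) ≤ y := fun p hp =>
    le_trans (Nat.cast_le.mpr (Finset.mem_Iic.mp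
      (Finset.mem_filter.mp (Finset.mem_filter.mp hp).1).1))
      (Nat.floor_le (le_of_lt hy0))
  -- the pair set
  set T := S.offDiag.filter (fun z => z.1 < z.2) with hTdef
  have hTmem : ∀ z ∈ T, z.1 ∈ S ∧ z.2 ∈ S ∧ z.1 < z.2 := by
    intro z hz
    obtain ⟨hzo, hzlt⟩ := Finset.mem_filter.mp hz
    obtain ⟨h1, h2, _⟩ := Finset.mem_offDiag.mp hzo
    exact ⟨h1, h2, hzlt⟩
  -- injectivity of multiplication on T
  have hinjT : ∀ z₁ ∈ T, ∀ z₂ ∈ T, z₁.1 * z₁.2 = z₂.1 * z₂.2 → z₁ = z₂ := by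
    intro z₁ hz₁ z₂ hz₂ h
    obtain ⟨ha1, ha2, ha3⟩ := hTmem z₁ hz₁
    obtain ⟨hb1, hb2, hb3⟩ := hTmem z₂ hz₂
    obtain ⟨e1, e2⟩ := aux_prime_mul_inj (hSprime _ ha1) (hSprime _ ha2)
      (hSprime _ hb1) (hSprime _ hb2) ha3 hb3 h
    exact Prod.ext e1 e2
  -- image is inside Icc 1 ⌊x⌋₊
  have hsubset : T.image (fun z : ℕ × ℕ => z.1 * z.2) ⊆ Finset.Icc 1 ⌊x⌋₊ := by
    intro n hn
    obtain ⟨z, hz, rfl⟩ := Finset.mem_image.mp hn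
    obtain ⟨h1, h2, _⟩ := hTmem z hz
    refine Finset.mem_Icc.mpr ⟨Nat.one_le_iff_ne_zero.mpr ?_, Nat.le_floor ?_⟩
    · exact Nat.mul_ne_zero (hSprime _ h1).pos.ne' (hSprime _ h2).pos.ne'
    · push_cast
      nlinarith [hSley _ h1, hSley _ h2, Nat.cast_nonneg (α := ℝ) z.1,
        Nat.cast_nonneg (α := ℝ) z.2]
  -- sum over Icc dominates sum over image
  have hstep1 : (∑ n ∈ T.image (fun z : ℕ × ℕ => z.1 * z.2), lam n * mu n)
      ≤ ∑ n ∈ Finset.Icc 1 ⌊x⌋₊, lam n * mu n := by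
    apply Finset.sum_le_sum_of_subset_of_nonneg hsubset
    intro n hn _
    obtain ⟨h1, h2⟩ := Finset.mem_Icc.mp hn
    exact hnonneg n h1 (le_trans (Nat.cast_le.mpr h2) (Nat.floor_le hx0))
  have hstep2 : (∑ n ∈ T.image (fun z : ℕ × ℕ => z.1 * z.2), lam n * mu n)
      = ∑ z ∈ T, lam (z.1 * z.2) * mu (z.1 * z.2) :=
    Finset.sum_image hinjT
  have hstep3 : δ * (T.card : ℝ) ≤ ∑ z ∈ T, lam (z.1 * z.2) * mu (z.1 * z.2) := by
    have := Finset.card_nsmul_le_sum T (fun z => lam (z.1 * z.2) * mu (z.1 * z.2)) δ ?_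
    · rw [nsmul_eq_mul] at this; linarith
    · intro z hz
      obtain ⟨h1, h2, hlt⟩ := hTmem z hz
      show δ ≤ lam (z.1 * z.2) * mu (z.1 * z.2)
      have hne : z.1 ≠ z.2 := Nat.ne_of_lt hlt
      rw [hlam_mul _ _ (hSprime _ h1) (hSprime _ h2) hne,
        hmu_mul _ _ (hSprime _ h1) (hSprime _ h2) hne]
      have e : lam z.1 * lam z.2 * (mu z.1 * mu z.2)
          = (lam z.1 * mu z.1) * (lam z.2 * mu z.2) := by ring
      rw [e]
      have hs1 := hgood _ h1
      have hs2 := hgood _ h2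
      have hsd : Real.sqrt δ * Real.sqrt δ = δ := Real.mul_self_sqrt hδ0.le
      nlinarith [Real.sqrt_nonneg δ]
  -- T.card in terms of S.card
  have hTcard : 2 * T.card = S.card * S.card - S.card := by
    have hoff : S.offDiag.card = S.card * S.card - S.card := Finset.offDiag_card S
    have hsplit2 : T.card + (S.offDiag.filter (fun z => ¬ z.1 < z.2)).card
        = S.offDiag.card := Finset.card_filter_add_card_filter_not _
    have hswap : (S.offDiag.filter (fun z => ¬ z.1 < z.2)).card = T.card := by
      apply Finset.card_bij (fun z _ => Prod.swap z)
      · intro z hz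
        obtain ⟨hzo, hzn⟩ := Finset.mem_filter.mp hz
        obtain ⟨h1, h2, hne⟩ := Finset.mem_offDiag.mp hzo
        refine Finset.mem_filter.mpr ⟨Finset.mem_offDiag.mpr ⟨h2, h1, (Ne.symm hne)⟩, ?_⟩
        simpa using lt_of_le_of_ne (not_lt.mp hzn) (Ne.symm hne)
      · intro z₁ h₁ z₂ h₂ h
        exact Prod.swap_injective h
      · intro z hz
        obtain ⟨hzo, hzlt⟩ := Finset.mem_filter.mp hz
        obtain ⟨h1, h2, hne⟩ := Finset.mem_offDiag.mp hzo
        refine ⟨Prod.swap z, Finset.mem_filter.mpr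
          ⟨Finset.mem_offDiag.mpr ⟨h2, h1, Ne.symm hne⟩, ?_⟩, Prod.swap_swap z⟩
        simpa using le_of_lt hzlt
    omega
  have hTcardR : (S.card : ℝ) * (S.card : ℝ) - (S.card : ℝ) ≤ 2 * (T.card : ℝ) := by
    have hle : S.card ≤ S.card * S.card := Nat.le_mul_of_pos_left _ (by
      have : (0:ℝ) < S.card := by linarith
      exact_mod_cast this)
    have : ((S.card * S.card - S.card : ℕ) : ℝ)
        = (S.card : ℝ) * (S.card : ℝ) - (S.card : ℝ) := by
      rw [Nat.cast_sub hle]; push_cast; ring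
    rw [← this, ← hTcard]; push_cast; linarith
  -- final computation
  have hlogx : Real.log x = 2 * Real.log y := by
    rw [hydef, Real.log_sqrt hx0]; ring
  have hlogx0 : 0 < Real.log x := by rw [hlogx]; linarith
  rw [ge_iff_le, div_le_iff₀ (by positivity : (0:ℝ) < (Real.log x) ^ 2)]
  have hchain : δ * (T.card : ℝ) ≤ ∑ n ∈ Finset.Icc 1 ⌊x⌋₊, lam n * mu n := by
    rw [← hstep2] at hstep3
    linarith
  have hfin := aux_final hc₀ hy0 hylogpos hyy hNy hN2 hTcardR hlogx
  have hmono : c₀ / 12 * (T.card : ℝ) * Real.log x ^ 2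
      ≤ (∑ n ∈ Finset.Icc 1 ⌊x⌋₊, lam n * mu n) * Real.log x ^ 2 :=
    mul_le_mul_of_nonneg_right hchain (by positivity)
  exact le_trans hfin hmono
end

section
/- Let λ, μ : ℕ → ℝ be arithmetic functions satisfying: (a) |λ(n)μ(n)| ≤ d(n)²·n^{7/32} for all n ≥ 1; (b) for every ε > 0 there is a constant C_ε such that |Σ_{x<n≤2x} λ(n)μ(n)| ≤ C_ε·x^{12/17+ε} for all x ≥ 1; (c) there exist c > 0 and x₀ ≥ 2 such that Σ_{x<n≤2x} λ(n)²μ(n)² ≥ c·x/(log x)² for all x ≥ x₀. Then there exists x₁ such that for every real x ≥ x₁ the interval (x, 2x] contains an integer n with λ(n)μ(n) < 0 and also an integer m with λ(m)μ(m) > 0. -/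
/-
If `λμ` kept one sign on `(x, 2x]`, then
`∑ (λμ)² ≤ max |λμ| · |∑ λμ| ≪ x ^ (7/32 + ε) · x ^ (12/17 + ε)`, the factor `d(n)²` of (a)
being absorbed by the divisor bound `d(n) ≪ n ^ ε`. Since `7/32 + 12/17 < 1`, this contradicts
the lower bound `x / (log x)²` of (c) once `x` is large.
-/

open Real Filter Asymptotics

lemma add_one_le_rpow_of_two_rpow_inv_le {ε p : ℝ} (hε : 0 < ε) (hp : 2 ^ ε⁻¹ ≤ p) (a : ℕ) :
    (a + 1 : ℝ) ≤ p ^ (a * ε) := by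
  have hp0 : 0 ≤ p := (rpow_nonneg zero_le_two _).trans hp
  have h2p : 2 ≤ p ^ ε := by
    calc (2 : ℝ) = (2 ^ ε⁻¹) ^ ε := by
          rw [← rpow_mul zero_le_two, inv_mul_cancel₀ hε.ne', rpow_one]
      _ ≤ p ^ ε := rpow_le_rpow (by positivity) hp hε.le
  calc (a + 1 : ℝ) ≤ 2 ^ a := by exact_mod_cast Nat.lt_two_pow_self
    _ ≤ (p ^ ε) ^ a := pow_le_pow_left₀ zero_le_two h2p a
    _ = p ^ (a * ε) := by rw [mul_comm, rpow_mul hp0, rpow_natCast]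

lemma add_one_le_mul_rpow_of_two_le {ε p : ℝ} (hε : 0 < ε) (hp : 2 ≤ p) (a : ℕ) :
    (a + 1 : ℝ) ≤ (1 + (ε * log 2)⁻¹) * p ^ (a * ε) := by
  have hk : 0 < ε * log 2 := mul_pos hε (log_pos one_lt_two)
  have hexp : 1 + a * (ε * log 2) ≤ p ^ (a * ε) :=
    calc 1 + a * (ε * log 2) ≤ exp (a * ε * log 2) := by
          rw [add_comm, ← mul_assoc]; exact add_one_le_exp _
      _ = 2 ^ (a * ε) := by rw [rpow_def_of_pos two_pos]; ring_nf
      _ ≤ p ^ (a * ε) := rpow_le_rpow zero_le_two hp (by positivity)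
  calc (a + 1 : ℝ) ≤ (1 + (ε * log 2)⁻¹) * (1 + a * (ε * log 2)) := by
        have hcancel : (ε * log 2)⁻¹ * (a * (ε * log 2)) = a := by field_simp
        nlinarith [inv_pos.2 hk, hk]
    _ ≤ (1 + (ε * log 2)⁻¹) * p ^ (a * ε) := by gcongr

/- Only the primes `p ≤ 2 ^ ε⁻¹` can have `a + 1 > p ^ (a * ε)`, and each of them costs at most
the factor `M`. -/
theorem exists_card_divisors_le_mul_rpow {ε : ℝ} (hε : 0 < ε) :
    ∃ C : ℝ, 0 ≤ C ∧ ∀ n : ℕ, n ≠ 0 → (n.divisors.card : ℝ) ≤ C * (n : ℝ) ^ ε := by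
  set M : ℝ := 1 + (ε * log 2)⁻¹
  have hM : 1 ≤ M := le_add_of_nonneg_right (by positivity)
  set K : ℕ := ⌈(2 : ℝ) ^ ε⁻¹⌉₊
  refine ⟨M ^ (K + 1), by positivity, fun n hn => ?_⟩
  have hlocal : ∀ p ∈ n.primeFactors, (n.factorization p + 1 : ℝ) ≤
      (if p ≤ K then M else 1) * (p : ℝ) ^ (n.factorization p * ε) := by
    intro p hp
    split_ifs with hpK
    · have h2p : (2 : ℝ) ≤ p := by exact_mod_cast (Nat.prime_of_mem_primeFactors hp).two_le
      exact add_one_le_mul_rpow_of_two_le hε h2p _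
    · have hKp : (2 : ℝ) ^ ε⁻¹ ≤ p :=
        (Nat.le_ceil _).trans (by exact_mod_cast (not_le.1 hpK).le)
      rw [one_mul]
      exact add_one_le_rpow_of_two_rpow_inv_le hε hKp _
  have hprod : (n : ℝ) ^ ε = ∏ p ∈ n.primeFactors, (p : ℝ) ^ (n.factorization p * ε) := by
    conv_lhs =>
      rw [← Nat.prod_factorization_pow_eq_self hn, Nat.prod_factorization_eq_prod_primeFactors]
    push_cast
    rw [← Real.finsetProd_rpow _ _ (fun p _ => by positivity)]
    refine Finset.prod_congr rfl fun p _ => ?_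
    rw [← rpow_natCast, ← rpow_mul (Nat.cast_nonneg p)]
  have hcount : ∏ p ∈ n.primeFactors, (if p ≤ K then M else 1) ≤ M ^ (K + 1) := by
    rw [← Finset.prod_filter, Finset.prod_const]
    refine pow_le_pow_right₀ hM ((Finset.card_le_card fun p hp => ?_).trans_eq
      (Finset.card_range _))
    exact Finset.mem_range.2 (Nat.lt_succ_of_le (Finset.mem_filter.1 hp).2)
  calc (n.divisors.card : ℝ) = ∏ p ∈ n.primeFactors, (n.factorization p + 1 : ℝ) := by
        rw [Nat.card_divisors hn]; push_cast; rfl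
    _ ≤ ∏ p ∈ n.primeFactors, (if p ≤ K then M else 1) * (p : ℝ) ^ (n.factorization p * ε) :=
        Finset.prod_le_prod (fun _ _ => by positivity) hlocal
    _ ≤ M ^ (K + 1) * (n : ℝ) ^ ε := by
        rw [Finset.prod_mul_distrib, hprod]; gcongr

lemma exists_abs_le_mul_rpow_of_abs_le_card_divisors_sq_mul_rpow {f : ℕ → ℝ} {α : ℝ}
    (hf : ∀ n : ℕ, 1 ≤ n → |f n| ≤ (n.divisors.card : ℝ) ^ 2 * (n : ℝ) ^ α)
    {ε : ℝ} (hε : 0 < ε) :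
    ∃ C : ℝ, 0 ≤ C ∧ ∀ n : ℕ, n ≠ 0 → |f n| ≤ C * (n : ℝ) ^ (α + ε) := by
  obtain ⟨C, hC, hd⟩ := exists_card_divisors_le_mul_rpow (half_pos hε)
  refine ⟨C ^ 2, sq_nonneg C, fun n hn => ?_⟩
  have hn0 : (0 : ℝ) < n := by positivity
  calc |f n| ≤ (n.divisors.card : ℝ) ^ 2 * (n : ℝ) ^ α := hf n (Nat.one_le_iff_ne_zero.2 hn)
    _ ≤ (C * (n : ℝ) ^ (ε / 2)) ^ 2 * (n : ℝ) ^ α := by gcongr; exact hd n hn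
    _ = C ^ 2 * (n : ℝ) ^ (α + ε) := by
      rw [mul_pow, ← rpow_mul_natCast hn0.le, mul_assoc, ← rpow_add hn0]
      ring_nf

lemma sum_sq_le_mul_abs_sum_of_nonneg {ι : Type*} {s : Finset ι} {f : ι → ℝ} {B : ℝ}
    (hB : ∀ i ∈ s, |f i| ≤ B) (hf : ∀ i ∈ s, 0 ≤ f i) :
    ∑ i ∈ s, f i ^ 2 ≤ B * |∑ i ∈ s, f i| := by
  rw [Finset.abs_sum_of_nonneg hf, Finset.mul_sum]
  refine Finset.sum_le_sum fun i hi => ?_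
  rw [sq]
  exact mul_le_mul_of_nonneg_right ((le_abs_self _).trans (hB i hi)) (hf i hi)

lemma exists_neg_and_exists_pos_of_mul_abs_sum_lt_sum_sq {ι : Type*} {s : Finset ι}
    {f : ι → ℝ} {B : ℝ} (hB : ∀ i ∈ s, |f i| ≤ B) (h : B * |∑ i ∈ s, f i| < ∑ i ∈ s, f i ^ 2) :
    (∃ i ∈ s, f i < 0) ∧ ∃ i ∈ s, 0 < f i := by
  constructor
  · by_contra! hf
    exact h.not_ge (sum_sq_le_mul_abs_sum_of_nonneg hB hf)
  · by_contra! hf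
    have hneg := sum_sq_le_mul_abs_sum_of_nonneg (f := fun i => -f i)
      (fun i hi => (abs_neg (f i)).trans_le (hB i hi)) (fun i hi => neg_nonneg.2 (hf i hi))
    simp only [neg_sq, Finset.sum_neg_distrib, abs_neg] at hneg
    exact h.not_ge hneg

lemma eventually_mul_rpow_lt_div_log_sq {θ c : ℝ} (hθ : θ < 1) (hc : 0 < c) (E : ℝ) :
    ∀ᶠ x in atTop, E * x ^ θ < c * x / log x ^ 2 := by
  have hr : 0 < (1 - θ) / 2 := by linarith
  have hlittle : (fun x => E * x ^ θ * log x ^ 2) =o[atTop] id := by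
    have h := ((isLittleO_log_rpow_atTop hr).pow two_pos).const_mul_left E
    refine ((isBigO_refl (fun x : ℝ => x ^ θ) atTop).mul_isLittleO h).congr' ?_ ?_
    · exact Eventually.of_forall fun x => by ring
    · filter_upwards [eventually_gt_atTop 0] with x hx
      rw [← rpow_natCast, ← rpow_mul hx.le, ← rpow_add hx]
      ring_nf
      exact rpow_one x
  filter_upwards [hlittle.def (half_pos hc), eventually_gt_atTop 1] with x hx hx1
  have hlog : 0 < log x ^ 2 := pow_pos (log_pos hx1) 2
  rw [lt_div_iff₀ hlog]
  rw [Real.norm_eq_abs, Real.norm_eq_abs, id, abs_of_pos (by linarith : 0 < x)] at hx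
  linarith [le_abs_self (E * x ^ θ * log x ^ 2), mul_pos hc (zero_lt_one.trans hx1)]

lemma mem_Ioc_floor_floor_two_mul_iff {x : ℝ} (hx : 0 ≤ x) (n : ℕ) :
    n ∈ Finset.Ioc ⌊x⌋₊ ⌊2 * x⌋₊ ↔ x < n ∧ (n : ℝ) ≤ 2 * x := by
  rw [Finset.mem_Ioc, Nat.floor_lt hx, Nat.le_floor_iff (by positivity)]

lemma abs_le_mul_rpow_of_mem_Ioc_floor_floor_two_mul {f : ℕ → ℝ} {C α x : ℝ} (hC : 0 ≤ C)
    (hα : 0 ≤ α) (hx : 0 < x) (hf : ∀ n : ℕ, n ≠ 0 → |f n| ≤ C * (n : ℝ) ^ α) {n : ℕ}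
    (hn : n ∈ Finset.Ioc ⌊x⌋₊ ⌊2 * x⌋₊) :
    |f n| ≤ C * 2 ^ α * x ^ α := by
  obtain ⟨hxn, hn2x⟩ := (mem_Ioc_floor_floor_two_mul_iff hx.le n).1 hn
  calc |f n| ≤ C * n ^ α := hf n (Nat.cast_pos.1 (hx.trans hxn)).ne'
    _ ≤ C * (2 * x) ^ α := by gcongr
    _ = C * 2 ^ α * x ^ α := by rw [mul_rpow zero_le_two hx.le]; ring

/-- Theorem 1.1 in conditional form: coefficients satisfying the Kim–Sarnak bound (a), the
Rankin–Selberg upper bound of Jiang–Meher (b), and the dyadic lower bound (c) produce, in every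
dyadic interval `(x, 2x]` with `x` large enough, both a negative and a positive value of
`λ(n)μ(n)`. -/
theorem sign_change_in_dyadic_intervals
    (lam mu : ℕ → ℝ)
    (ha : ∀ n : ℕ, 1 ≤ n →
      |lam n * mu n| ≤ (n.divisors.card : ℝ) ^ 2 * (n : ℝ) ^ ((7 : ℝ)/32))
    (hb : ∀ ε : ℝ, 0 < ε → ∃ Cε : ℝ, ∀ x : ℝ, 1 ≤ x →
      |∑ n ∈ Finset.Ioc ⌊x⌋₊ ⌊2 * x⌋₊, lam n * mu n| ≤ Cε * x ^ ((12 : ℝ)/17 + ε))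
    (hc : ∃ c : ℝ, 0 < c ∧ ∃ x₀ : ℝ, 2 ≤ x₀ ∧ ∀ x : ℝ, x₀ ≤ x →
      (∑ n ∈ Finset.Ioc ⌊x⌋₊ ⌊2 * x⌋₊, lam n ^ 2 * mu n ^ 2) ≥ c * x / (Real.log x) ^ 2) :
    ∃ x₁ : ℝ, ∀ x : ℝ, x₁ ≤ x →
      (∃ n : ℕ, x < (n : ℝ) ∧ (n : ℝ) ≤ 2 * x ∧ lam n * mu n < 0) ∧
      (∃ m : ℕ, x < (m : ℝ) ∧ (m : ℝ) ≤ 2 * x ∧ lam m * mu m > 0) := by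
  obtain ⟨c, hc, x₀, -, hlow⟩ := hc
  obtain ⟨C₁, hC₁, hpoint⟩ :=
    exists_abs_le_mul_rpow_of_abs_le_card_divisors_sq_mul_rpow ha (ε := 1 / 100) (by norm_num)
  obtain ⟨C₂, hsum⟩ := hb (1 / 100) (by norm_num)
  set α : ℝ := 7 / 32 + 1 / 100
  set β : ℝ := 12 / 17 + 1 / 100
  obtain ⟨x₁, hx₁⟩ := eventually_atTop.1
    ((eventually_mul_rpow_lt_div_log_sq (θ := α + β) (by norm_num) hc (C₁ * 2 ^ α * C₂)).and
      (eventually_ge_atTop (max x₀ 1)))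
  refine ⟨x₁, fun x hx => ?_⟩
  obtain ⟨hlt, hx⟩ := hx₁ x hx
  have hx0 : 0 < x := zero_lt_one.trans_le (le_of_max_le_right hx)
  set s := Finset.Ioc ⌊x⌋₊ ⌊2 * x⌋₊
  have hbound : ∀ n ∈ s, |lam n * mu n| ≤ C₁ * 2 ^ α * x ^ α := fun n =>
    abs_le_mul_rpow_of_mem_Ioc_floor_floor_two_mul hC₁ (by norm_num) hx0 hpoint
  have hkey : C₁ * 2 ^ α * x ^ α * |∑ n ∈ s, lam n * mu n| < ∑ n ∈ s, (lam n * mu n) ^ 2 :=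
    calc _ ≤ C₁ * 2 ^ α * x ^ α * (C₂ * x ^ β) := by
          gcongr; exact hsum x (le_of_max_le_right hx)
      _ = C₁ * 2 ^ α * C₂ * x ^ (α + β) := by rw [rpow_add hx0 α β]; ring
      _ < c * x / log x ^ 2 := hlt
      _ ≤ ∑ n ∈ s, lam n ^ 2 * mu n ^ 2 := hlow x (le_of_max_le_left hx)
      _ = ∑ n ∈ s, (lam n * mu n) ^ 2 := by simp only [mul_pow]
  obtain ⟨⟨n, hn, hneg⟩, ⟨m, hm, hpos⟩⟩ :=
    exists_neg_and_exists_pos_of_mul_abs_sum_lt_sum_sq hbound hkey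
  rw [mem_Ioc_floor_floor_two_mul_iff hx0.le] at hn hm
  exact ⟨⟨n, hn.1, hn.2, hneg⟩, ⟨m, hm.1, hm.2, hpos⟩⟩
end

section
/- Let δ = 1/5208 and let c₁, c₂ > 0, W ≥ 1 and X₀ ≥ 16 be real numbers. Let λ, μ : ℕ → ℝ be arithmetic functions such that: (i) for every real x ≥ X₀, if λ(n)μ(n) ≥ 0 for all integers 1 ≤ n ≤ x, then Σ_{n≤x} λ(n)μ(n)·(log(x/n))² ≥ c₁·x^{25/32}/(log x)²; and (ii) for every real x ≥ 2, Σ_{n≤x} λ(n)μ(n)·(log(x/n))² ≤ c₂·W^{3/2−2δ}·x^{1/2+δ}. Then there exist a constant C, depending only on c₁ and c₂, and a positive integer n ≤ max(X₀+1, C·W^{5.34}) with λ(n)μ(n) < 0. -/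
/-- The final deduction of Theorem 1.3 (with `δ = 1/5208`): if the weighted sum
`S(x) = Σ_{n≤x} λ(n)μ(n)(log(x/n))²` satisfies the Proposition 3.2 lower bound
`S(x) ≥ c₁·x^{25/32}/(log x)²` whenever `λ(n)μ(n) ≥ 0` for all `n ≤ x` with `x ≥ X₀`, and the
Proposition 5.4 upper bound `S(x) ≤ c₂·W^{3/2−2δ}·x^{1/2+δ}`, then there is a positive integer
`n ≤ max(X₀+1, C·W^{5.34})` with `λ(n)μ(n) < 0`, where `C` depends only on `c₁, c₂`. -/
theorem first_simultaneous_sign_change (c₁ c₂ : ℝ) (hc₁ : 0 < c₁) (hc₂ : 0 < c₂) :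
    ∃ C : ℝ, ∀ W X₀ : ℝ, 1 ≤ W → 16 ≤ X₀ → ∀ lam mu : ℕ → ℝ,
      (∀ x : ℝ, X₀ ≤ x → (∀ n : ℕ, 1 ≤ n → (n : ℝ) ≤ x → 0 ≤ lam n * mu n) →
        (∑ n ∈ Finset.Icc 1 ⌊x⌋₊, lam n * mu n * (Real.log (x / (n : ℝ))) ^ 2) ≥
          c₁ * x ^ ((25 : ℝ)/32) / (Real.log x) ^ 2) →
      (∀ x : ℝ, 2 ≤ x →
        (∑ n ∈ Finset.Icc 1 ⌊x⌋₊, lam n * mu n * (Real.log (x / (n : ℝ))) ^ 2) ≤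
          c₂ * W ^ ((3 : ℝ)/2 - 2 * (1/5208)) * x ^ ((1 : ℝ)/2 + 1/5208)) →
      ∃ n : ℕ, 0 < n ∧ (n : ℝ) ≤ max (X₀ + 1) (C * W ^ (5.34 : ℝ)) ∧
        lam n * mu n < 0 := by
  -- exponents
  set b : ℝ := (3 : ℝ)/2 - 2 * (1/5208) with hb
  set a : ℝ := b / 5.34 with ha
  have hb0 : (0 : ℝ) < b := by norm_num [hb]
  have ha0 : (0 : ℝ) < a := by positivity
  -- ε = 1/10000
  set ε : ℝ := 1/10000 with hε
  have hε0 : (0 : ℝ) < ε := by norm_num [hε]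
  obtain ⟨K, hK⟩ : ∃ K : ℝ, K = c₂ / (c₁ * ε ^ 2) + 1 := ⟨_, rfl⟩
  have hK1 : (1 : ℝ) ≤ K := by
    have h : 0 < c₂ / (c₁ * ε ^ 2) := by positivity
    rw [hK]; linarith
  refine ⟨K ^ (1/a), ?_⟩
  intro W X₀ hW hX₀ lam mu hlow hup
  set C : ℝ := K ^ (1/a) with hC
  have hC1 : (1 : ℝ) ≤ C := Real.one_le_rpow hK1 (by positivity)
  have hCa : C ^ a = K := by
    rw [hC, ← Real.rpow_mul (by linarith : (0:ℝ) ≤ K)]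
    rw [one_div, inv_mul_cancel₀ (ne_of_gt ha0), Real.rpow_one]
  by_contra hcon
  push_neg at hcon
  set x : ℝ := max (X₀ + 1) (C * W ^ (5.34 : ℝ)) with hx
  have hxX : X₀ ≤ x := le_trans (by linarith) (le_max_left _ _)
  have hx17 : (17 : ℝ) ≤ x := le_trans (by linarith) (le_max_left _ _)
  have hx1 : (1 : ℝ) < x := by linarith
  have hx0 : (0 : ℝ) < x := by linarith
  have hlogpos : 0 < Real.log x := Real.log_pos hx1
  have hlb := hlow x hxX (fun n hn hnx => hcon n hn hnx)
  have hub := hup x (by linarith)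
  have hmain : c₁ * x ^ ((25 : ℝ)/32) / (Real.log x) ^ 2 ≤ c₂ * W ^ b * x ^ ((1 : ℝ)/2 + 1/5208) :=
    le_trans hlb hub
  -- W ^ 5.34 ≤ x / C
  have hW534 : W ^ (5.34 : ℝ) ≤ x / C := by
    rw [le_div_iff₀ (by linarith : (0:ℝ) < C), mul_comm]
    exact le_max_right _ _
  -- W ^ b ≤ x ^ a / C ^ a
  have hWb : W ^ b ≤ x ^ a / C ^ a := by
    have h1 : W ^ b = (W ^ (5.34 : ℝ)) ^ a := by
      rw [← Real.rpow_mul (by linarith : (0:ℝ) ≤ W)]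
      norm_num [ha, hb]
    rw [h1, ← Real.div_rpow hx0.le (by linarith : (0:ℝ) ≤ C)]
    exact Real.rpow_le_rpow (by positivity) hW534 ha0.le
  -- (log x)² ≤ x ^ (2ε) / ε²
  have hlog2 : (Real.log x) ^ 2 ≤ x ^ (2 * ε) / ε ^ 2 := by
    have h1 : Real.log x ≤ x ^ ε / ε := Real.log_le_rpow_div hx0.le hε0
    have h2 : (Real.log x) ^ 2 ≤ (x ^ ε / ε) ^ 2 :=
      pow_le_pow_left₀ hlogpos.le h1 2
    calc (Real.log x) ^ 2 ≤ (x ^ ε / ε) ^ 2 := h2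
      _ = (x ^ ε) ^ 2 / ε ^ 2 := by rw [div_pow]
      _ = x ^ (2 * ε) / ε ^ 2 := by
          rw [← Real.rpow_natCast (x ^ ε) 2, ← Real.rpow_mul hx0.le]
          norm_num [mul_comm]
  -- multiply hmain by (log x)²
  have h3 : c₁ * x ^ ((25 : ℝ)/32) ≤ c₂ * W ^ b * x ^ ((1 : ℝ)/2 + 1/5208) * (Real.log x) ^ 2 := by
    rw [div_le_iff₀ (by positivity)] at hmain
    linarith
  -- bound the RHS
  have hxad : (0:ℝ) ≤ x ^ ((1:ℝ)/2 + 1/5208) := (Real.rpow_pos_of_pos hx0 _).le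
  have h4 : c₂ * W ^ b * x ^ ((1 : ℝ)/2 + 1/5208) * (Real.log x) ^ 2 ≤
      c₂ / (C ^ a * ε ^ 2) * x ^ (a + ((1:ℝ)/2 + 1/5208) + 2 * ε) := by
    have hWb' : 0 ≤ W ^ b := (Real.rpow_pos_of_pos (by linarith) _).le
    have hCa0 : (0:ℝ) < C ^ a := by rw [hCa]; linarith
    calc c₂ * W ^ b * x ^ ((1 : ℝ)/2 + 1/5208) * (Real.log x) ^ 2
        ≤ c₂ * (x ^ a / C ^ a) * x ^ ((1 : ℝ)/2 + 1/5208) * (x ^ (2*ε) / ε ^ 2) := by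
          apply mul_le_mul
          · apply mul_le_mul_of_nonneg_right _ hxad
            exact mul_le_mul_of_nonneg_left hWb hc₂.le
          · exact hlog2
          · positivity
          · positivity
      _ = c₂ / (C ^ a * ε ^ 2) * (x ^ a * x ^ ((1:ℝ)/2 + 1/5208) * x ^ (2*ε)) := by ring
      _ = c₂ / (C ^ a * ε ^ 2) * x ^ (a + ((1:ℝ)/2 + 1/5208) + 2 * ε) := by
          rw [← Real.rpow_add hx0, ← Real.rpow_add hx0]
  have hexp : a + ((1:ℝ)/2 + 1/5208) + 2 * ε ≤ (25:ℝ)/32 := by norm_num [ha, hb, hε]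
  have h5 : x ^ (a + ((1:ℝ)/2 + 1/5208) + 2 * ε) ≤ x ^ ((25:ℝ)/32) :=
    Real.rpow_le_rpow_of_exponent_le hx1.le hexp
  have hCa0 : (0:ℝ) < C ^ a := by rw [hCa]; linarith
  have h6 : c₁ * x ^ ((25 : ℝ)/32) ≤ c₂ / (C ^ a * ε ^ 2) * x ^ ((25:ℝ)/32) := by
    calc c₁ * x ^ ((25 : ℝ)/32) ≤ c₂ / (C ^ a * ε ^ 2) * x ^ (a + ((1:ℝ)/2 + 1/5208) + 2 * ε) :=
          le_trans h3 h4
      _ ≤ c₂ / (C ^ a * ε ^ 2) * x ^ ((25:ℝ)/32) := by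
          apply mul_le_mul_of_nonneg_left h5 (by positivity)
  have h7 : c₁ ≤ c₂ / (C ^ a * ε ^ 2) :=
    le_of_mul_le_mul_right h6 (Real.rpow_pos_of_pos hx0 _)
  -- contradiction: C^a = c₂/(c₁ε²) + 1
  have h8 : c₁ * (C ^ a * ε ^ 2) ≤ c₂ := by
    rw [le_div_iff₀ (by positivity)] at h7; linarith
  rw [hCa, hK] at h8
  have : c₁ * ((c₂ / (c₁ * ε ^ 2) + 1) * ε ^ 2) = c₂ + c₁ * ε ^ 2 := by
    field_simp
  rw [this] at h8
  linarith [mul_pos hc₁ (pow_pos hε0 2)]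
end
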